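/- arXiv:math/0311324 — 6 statements merged into one kernel-verified Lean document; each statement's English description precedes it below -/
import Mathlib

section
/- Let (Ω,Σ,μ) be a nonatomic probability space, 1 ≤ p < ∞, and X a Banach space. Every compact bounded linear operator T: L_p(Ω,Σ,μ) → X is hereditarily PP-narrow (HPP-narrow). -/
open MeasureTheory ENNReal Set Filter

noncomputable section

variable {Ω : Type*} [MeasurableSpace Ω]

/-- `f ∈ L_p(μ)` is a *sign supported on* `A`: `f = χ_{B₁} - χ_{B₂}` where `B₁, B₂`
form a partition of `A` into two measurable subsets of equal measure. -/
def IsSignOn (μ : Measure Ω) [IsFiniteMeasure μ] (p : ℝ≥0∞) [Fact (1 ≤ p)]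
    (f : Lp ℝ p μ) (A : Set Ω) : Prop :=
  ∃ (B₁ B₂ : Set Ω) (h₁ : MeasurableSet B₁) (h₂ : MeasurableSet B₂),
    Disjoint B₁ B₂ ∧ B₁ ∪ B₂ = A ∧ μ B₁ = μ B₂ ∧
    f = indicatorConstLp p h₁ (measure_ne_top μ B₁) (1 : ℝ) -
        indicatorConstLp p h₂ (measure_ne_top μ B₂) (1 : ℝ)

/-- `T : L_p(μ) → X` is *PP-narrow*: for every measurable `A` of nonzero measure and
every `ε > 0` there is a sign `f` supported on `A` with `‖T f‖ ≤ ε`. -/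
def PPNarrow (μ : Measure Ω) [IsFiniteMeasure μ] (p : ℝ≥0∞) [Fact (1 ≤ p)]
    {X : Type*} [NormedAddCommGroup X] [NormedSpace ℝ X]
    (T : Lp ℝ p μ →L[ℝ] X) : Prop :=
  ∀ A : Set Ω, MeasurableSet A → 0 < μ A →
    ∀ ε : ℝ, 0 < ε → ∃ f : Lp ℝ p μ, IsSignOn μ p f A ∧ ‖T f‖ ≤ ε

/-- `S` is a sub-σ-algebra (of the σ-algebra of `Ω`) consisting of subsets of `A`. -/
structure IsSubSigmaAlgebraOn (A : Set Ω) (S : Set (Set Ω)) : Prop where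
  measurable : ∀ B ∈ S, MeasurableSet B
  subset : ∀ B ∈ S, B ⊆ A
  top_mem : A ∈ S
  diff_mem : ∀ B ∈ S, A \ B ∈ S
  iUnion_mem : ∀ g : ℕ → Set Ω, (∀ n, g n ∈ S) → (⋃ n, g n) ∈ S

/-- `μ` is nonatomic on the family `S`: every member of positive measure has a member
subset of strictly smaller positive measure. -/
def NonatomicOn (μ : Measure Ω) (S : Set (Set Ω)) : Prop :=
  ∀ B ∈ S, 0 < μ B → ∃ C ∈ S, C ⊆ B ∧ 0 < μ C ∧ μ C < μ B

/-- `f` is a sign supported on `B` whose two halves belong to the family `S`. -/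
def IsSignIn (μ : Measure Ω) [IsFiniteMeasure μ] (p : ℝ≥0∞) [Fact (1 ≤ p)]
    (f : Lp ℝ p μ) (B : Set Ω) (S : Set (Set Ω)) : Prop :=
  ∃ B₁ ∈ S, ∃ B₂ ∈ S, ∃ (h₁ : MeasurableSet B₁) (h₂ : MeasurableSet B₂),
    Disjoint B₁ B₂ ∧ B₁ ∪ B₂ = B ∧ μ B₁ = μ B₂ ∧
    f = indicatorConstLp p h₁ (measure_ne_top μ B₁) (1 : ℝ) -
        indicatorConstLp p h₂ (measure_ne_top μ B₂) (1 : ℝ)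

/-- `T : L_p(μ) → X` is *hereditarily PP-narrow*: for every `A` of nonzero measure
and every sub-σ-algebra `S` of subsets of `A` on which `μ` is nonatomic, the
restriction of `T` to `L_p(A, S, μ)` is PP-narrow. -/
def HPPNarrow (μ : Measure Ω) [IsFiniteMeasure μ] (p : ℝ≥0∞) [Fact (1 ≤ p)]
    {X : Type*} [NormedAddCommGroup X] [NormedSpace ℝ X]
    (T : Lp ℝ p μ →L[ℝ] X) : Prop :=
  ∀ A : Set Ω, MeasurableSet A → 0 < μ A →
    ∀ S : Set (Set Ω), IsSubSigmaAlgebraOn A S → NonatomicOn μ S →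
      ∀ B ∈ S, 0 < μ B → ∀ ε : ℝ, 0 < ε →
        ∃ f : Lp ℝ p μ, IsSignIn μ p f B S ∧ ‖T f‖ ≤ ε

/-- A bounded linear operator is *compact* if it maps bounded sets to relatively
compact sets. -/
def CompactOp {E F : Type*} [NormedAddCommGroup E] [NormedSpace ℝ E]
    [NormedAddCommGroup F] [NormedSpace ℝ F] (T : E →L[ℝ] F) : Prop :=
  ∀ s : Set E, Bornology.IsBounded s → IsCompact (closure (T '' s))

/-!
Fix `B` in the nonatomic sub-σ-algebra `S`. By Sierpiński's theorem every member of `S` can be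
halved inside `S`, and halving dyadically yields pairwise independent halves `R n` of `B`. The signs
`r n = χ_{R n} - χ_{B \ R n}` are then orthogonal in `L_2` with `‖r n‖₂² = μ B ≤ 1`, so an average
of `K` of them has `L_2`-norm at most `K^{-1/2}`; as it is bounded by `1`, its `L_p`-norm is at
most `K^{-1/(2p)}`. By compactness, `T r_{φ k} → y` along a subsequence; the images of averages
over long tails of it are close to `y` and to `0`, so `y` is small, and so is `T r_{φ k}`.
-/

open Function Topology

namespace IsSubSigmaAlgebraOn

variable {A B C : Set Ω} {S : Set (Set Ω)}

theorem empty_mem (hS : IsSubSigmaAlgebraOn A S) : ∅ ∈ S := by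
  simpa using hS.diff_mem A hS.top_mem

theorem union_mem (hS : IsSubSigmaAlgebraOn A S) (hB : B ∈ S) (hC : C ∈ S) : B ∪ C ∈ S := by
  have h := hS.iUnion_mem (fun n => if n = 0 then B else C) fun n => by split_ifs <;> assumption
  rwa [show (⋃ n : ℕ, if n = 0 then B else C) = B ∪ C from
    Subset.antisymm (iUnion_subset fun n => by split_ifs <;> simp) (union_subset
      (subset_iUnion_of_subset 0 (by simp)) (subset_iUnion_of_subset 1 (by simp)))] at h

theorem sdiff_mem (hS : IsSubSigmaAlgebraOn A S) (hB : B ∈ S) (hC : C ∈ S) : B \ C ∈ S := by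
  have h := hS.diff_mem _ (hS.union_mem (hS.diff_mem B hB) hC)
  rwa [show A \ ((A \ B) ∪ C) = B \ C by
    ext x; have := @hS.subset B hB x; simp only [Set.mem_sdiff, mem_union]; tauto] at h

end IsSubSigmaAlgebraOn

theorem ENNReal.exists_forall_le_two_mul {α : Type*} {P : Set α} {f : α → ℝ≥0∞} {a : α}
    (ha : a ∈ P) {t : ℝ≥0∞} (ht : t ≠ ∞) (hft : ∀ d ∈ P, f d ≤ t) :
    ∃ d ∈ P, ∀ e ∈ P, f e ≤ 2 * f d := by
  set g := ⨆ e ∈ P, f e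
  have hfg : ∀ e ∈ P, f e ≤ g := fun e he => le_biSup f he
  rcases eq_or_ne g 0 with hg | hg
  · exact ⟨a, ha, fun e he => (hfg e he).trans (hg.trans_le zero_le)⟩
  have hgt : g ≠ ∞ := ne_top_of_le_ne_top ht (iSup₂_le hft)
  obtain ⟨d, hd, hgd⟩ := lt_biSup_iff.1 (ENNReal.half_lt_self hg hgt)
  refine ⟨d, hd, fun e he => (hfg e he).trans ?_⟩
  rw [ENNReal.div_lt_iff (.inl two_ne_zero) (.inl ofNat_ne_top), mul_comm] at hgd
  exact hgd.le

theorem IsSubSigmaAlgebraOn.exists_greedy_piece {μ : Measure Ω} {A B C : Set Ω}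
    {S : Set (Set Ω)} (hS : IsSubSigmaAlgebraOn A S) {t : ℝ≥0∞} (ht : t ≠ ∞) (hC : μ C ≤ t) :
    ∃ D ∈ S, D ⊆ B \ C ∧ μ C + μ D ≤ t ∧
      ∀ E ∈ S, E ⊆ B \ C → μ C + μ E ≤ t → μ E ≤ 2 * μ D := by
  obtain ⟨D, ⟨hD, hDB, hDt⟩, hmax⟩ := ENNReal.exists_forall_le_two_mul (f := μ)
    (P := {D | D ∈ S ∧ D ⊆ B \ C ∧ μ C + μ D ≤ t}) ⟨hS.empty_mem, empty_subset _, by simpa⟩ ht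
    fun D hD => le_add_self.trans hD.2.2
  exact ⟨D, hD, hDB, hDt, fun E hE hEB hEt => hmax E ⟨hE, hEB, hEt⟩⟩

theorem IsSubSigmaAlgebraOn.exists_greedy_seq {μ : Measure Ω} {A B : Set Ω} {S : Set (Set Ω)}
    (hS : IsSubSigmaAlgebraOn A S) {t : ℝ≥0∞} (ht : t ≠ ∞) :
    ∃ C : ℕ → Set Ω, Monotone C ∧ ∀ n, C n ∈ S ∧ C n ⊆ B ∧ μ (C n) ≤ t ∧
      ∀ E ∈ S, E ⊆ B \ C n → μ (C n) + μ E ≤ t → 2 * μ (C n) + μ E ≤ 2 * μ (C (n + 1)) := by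
  have step : ∀ C, ∃ D, μ C ≤ t → D ∈ S ∧ D ⊆ B \ C ∧ μ C + μ D ≤ t ∧
      ∀ E ∈ S, E ⊆ B \ C → μ C + μ E ≤ t → μ E ≤ 2 * μ D := fun C => by
    by_cases hC : μ C ≤ t
    · obtain ⟨D, hD⟩ := hS.exists_greedy_piece (B := B) ht hC
      exact ⟨D, fun _ => hD⟩
    · exact ⟨∅, fun h => absurd h hC⟩
  choose next hnext using step
  let C : ℕ → Set Ω := fun n => n.rec ∅ fun _ C => C ∪ next C
  have hC : ∀ n, C n ∈ S ∧ C n ⊆ B ∧ μ (C n) ≤ t := by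
    intro n
    induction n with
    | zero => exact ⟨hS.empty_mem, empty_subset _, by simp [C]⟩
    | succ n ih =>
      obtain ⟨hD, hDB, hDt, -⟩ := hnext (C n) ih.2.2
      exact ⟨hS.union_mem ih.1 hD, union_subset ih.2.1 (hDB.trans sdiff_subset),
        (measure_union_le _ _).trans hDt⟩
  refine ⟨C, monotone_nat_of_le_succ fun n => subset_union_left, fun n =>
    ⟨(hC n).1, (hC n).2.1, (hC n).2.2, fun E hE hEB hEt => ?_⟩⟩
  obtain ⟨hD, hDB, -, hmax⟩ := hnext (C n) (hC n).2.2
  calc 2 * μ (C n) + μ E ≤ 2 * μ (C n) + 2 * μ (next (C n)) := by gcongr; exact hmax E hE hEB hEt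
    _ = 2 * μ (C (n + 1)) := by
      rw [← mul_add, ← measure_union (disjoint_sdiff_right.mono_right hDB) (hS.measurable _ hD)]

section Nonatomic

variable {μ : Measure Ω} [IsFiniteMeasure μ] {A B : Set Ω} {S : Set (Set Ω)}
  (hS : IsSubSigmaAlgebraOn A S) (hNA : NonatomicOn μ S)
include hS hNA

theorem NonatomicOn.exists_mem_subset_measure_le_half (hB : B ∈ S) (hpos : 0 < μ B) :
    ∃ C ∈ S, C ⊆ B ∧ 0 < μ C ∧ μ C ≤ μ B / 2 := by
  obtain ⟨C, hC, hCB, hCpos, hClt⟩ := hNA B hB hpos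
  rcases le_total (μ C) (μ B / 2) with h | h
  · exact ⟨C, hC, hCB, hCpos, h⟩
  have hBC : μ (B \ C) = μ B - μ C :=
    measure_sdiff hCB (hS.measurable C hC).nullMeasurableSet (measure_ne_top μ C)
  refine ⟨B \ C, hS.sdiff_mem hB hC, sdiff_subset, hBC ▸ tsub_pos_of_lt hClt, ?_⟩
  calc μ (B \ C) = μ B - μ C := hBC
    _ ≤ μ B - μ B / 2 := tsub_le_tsub_left h _
    _ = μ B / 2 := ENNReal.sub_half (measure_ne_top μ B)

theorem NonatomicOn.exists_mem_subset_measure_pos_le (hB : B ∈ S) (hpos : 0 < μ B)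
    {δ : ℝ≥0∞} (hδ : 0 < δ) : ∃ C ∈ S, C ⊆ B ∧ 0 < μ C ∧ μ C ≤ δ := by
  have hsmall : ∀ n : ℕ, ∃ C ∈ S, C ⊆ B ∧ 0 < μ C ∧ μ C ≤ μ B * 2⁻¹ ^ n := by
    intro n
    induction n with
    | zero => exact ⟨B, hB, subset_rfl, hpos, by simp⟩
    | succ n ih =>
      obtain ⟨C, hC, hCB, hCpos, hCle⟩ := ih
      obtain ⟨D, hD, hDC, hDpos, hDle⟩ := hNA.exists_mem_subset_measure_le_half hS hC hCpos
      refine ⟨D, hD, hDC.trans hCB, hDpos, hDle.trans ?_⟩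
      rw [pow_succ, ← mul_assoc, ← div_eq_mul_inv]
      gcongr
  have hlim : Tendsto (fun n : ℕ => μ B * 2⁻¹ ^ n) atTop (𝓝 0) := by
    simpa using ENNReal.Tendsto.const_mul
      (ENNReal.tendsto_pow_atTop_nhds_zero_iff.2 (by norm_num : (2⁻¹ : ℝ≥0∞) < 1))
      (.inr (measure_ne_top μ B))
  obtain ⟨n, hn⟩ := (hlim.eventually (Iic_mem_nhds hδ)).exists
  obtain ⟨C, hC, hCB, hCpos, hCle⟩ := hsmall n
  exact ⟨C, hC, hCB, hCpos, hCle.trans hn⟩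

theorem NonatomicOn.exists_mem_subset_measure_eq (hB : B ∈ S) {t : ℝ≥0∞} (ht : t ≤ μ B) :
    ∃ C ∈ S, C ⊆ B ∧ μ C = t := by
  have htop : t ≠ ∞ := ne_top_of_le_ne_top (measure_ne_top μ B) ht
  obtain ⟨C, hmono, hC⟩ := hS.exists_greedy_seq (μ := μ) (B := B) htop
  set U := ⋃ n, C n
  have hU : U ∈ S := hS.iUnion_mem C fun n => (hC n).1
  have hUt : μ U ≤ t := by
    rw [hmono.measure_iUnion]
    exact iSup_le fun n => (hC n).2.2.1
  refine ⟨U, hU, iUnion_subset fun n => (hC n).2.1, hUt.antisymm (not_lt.1 fun hlt => ?_)⟩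
  obtain ⟨E, hE, hEB, hEpos, hEt⟩ := hNA.exists_mem_subset_measure_pos_le hS (hS.sdiff_mem hB hU)
    ((tsub_pos_of_lt (hlt.trans_le ht)).trans_le le_measure_sdiff) (tsub_pos_of_lt hlt)
  -- `E` still fits at every stage, so every stage adds at least `μ E / 2`.
  have hgrowth : ∀ n : ℕ, n * μ E ≤ 2 * μ (C n) := by
    intro n
    induction n with
    | zero => simp
    | succ n ih =>
      have hfit : μ (C n) + μ E ≤ t := calc
        μ (C n) + μ E ≤ μ U + (t - μ U) := add_le_add (measure_mono (subset_iUnion C n)) hEt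
        _ = t := add_tsub_cancel_of_le hUt
      calc ((n + 1 : ℕ) : ℝ≥0∞) * μ E = n * μ E + μ E := by push_cast; ring
        _ ≤ 2 * μ (C n) + μ E := by gcongr
        _ ≤ 2 * μ (C (n + 1)) := (hC n).2.2.2 E hE
          (hEB.trans (sdiff_subset_sdiff_right (subset_iUnion C n))) hfit
  obtain ⟨n, hn⟩ :=
    ENNReal.exists_nat_mul_gt hEpos.ne' (ENNReal.mul_ne_top (ofNat_ne_top (n := 2)) htop)
  exact (hn.trans_le (hgrowth n)).not_ge (mul_le_mul_right (hC n).2.2.1 (2 : ℝ≥0∞))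

end Nonatomic

structure IsIndepHalves (μ : Measure Ω) (B : Set Ω) (R : ℕ → Set Ω) : Prop where
  measurableSet : ∀ n, MeasurableSet (R n)
  subset : ∀ n, R n ⊆ B
  measure_eq : ∀ n, μ (R n) = μ B / 2
  measure_inter : Pairwise fun i j => μ (R i ∩ R j) = μ B / 4

theorem measure_iUnion_inter_eq_half {ι : Type*} [Countable ι] {μ : Measure Ω} {C : ι → Set Ω}
    {R : Set Ω} (hd : Pairwise (Disjoint on C)) (hC : ∀ i, MeasurableSet (C i))
    (hR : MeasurableSet R) (h : ∀ i, μ (C i ∩ R) = μ (C i) / 2) :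
    μ ((⋃ i, C i) ∩ R) = μ (⋃ i, C i) / 2 := by
  rw [iUnion_inter, measure_iUnion (hd.mono fun i j => Disjoint.mono inter_subset_left
    inter_subset_left) fun i => (hC i).inter hR, measure_iUnion hd hC]
  simp only [h, div_eq_mul_inv, ENNReal.tsum_mul_right]

section DyadicCells

variable {α : Type*} (h : Set α → Set α) (B : Set α)

/-- Cell `j` of level `n` splits into the cells `2 * j` (its image under `h`) and `2 * j + 1` of
level `n + 1`. -/
def dyadicCell : ℕ → ℕ → Set α
  | 0, j => if j = 0 then B else ∅
  | n + 1, j =>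
    if j % 2 = 0 then h (dyadicCell n (j / 2)) else dyadicCell n (j / 2) \ h (dyadicCell n (j / 2))

def rademacherSet (n : ℕ) : Set α := ⋃ j, h (dyadicCell h B n j)

variable {h B}

theorem dyadicCell_succ_two_mul (n j : ℕ) :
    dyadicCell h B (n + 1) (2 * j) = h (dyadicCell h B n j) := by
  simp [dyadicCell]

theorem dyadicCell_succ_two_mul_add_one (n j : ℕ) :
    dyadicCell h B (n + 1) (2 * j + 1) = dyadicCell h B n j \ h (dyadicCell h B n j) := by
  simp [dyadicCell, Nat.add_mod, show (2 * j + 1) / 2 = j by omega]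

section Subset

variable (hsub : ∀ C, h C ⊆ C)
include hsub

theorem dyadicCell_succ_subset (n j : ℕ) : dyadicCell h B (n + 1) j ⊆ dyadicCell h B n (j / 2) := by
  simp only [dyadicCell]
  split_ifs
  exacts [hsub _, sdiff_subset]

theorem dyadicCell_subset (n j : ℕ) : dyadicCell h B n j ⊆ B := by
  induction n generalizing j with
  | zero => simp only [dyadicCell]; split_ifs <;> simp
  | succ n ih => exact (dyadicCell_succ_subset hsub n j).trans (ih _)

theorem dyadicCell_succ_union (n j : ℕ) :
    dyadicCell h B (n + 1) (2 * j) ∪ dyadicCell h B (n + 1) (2 * j + 1) = dyadicCell h B n j := by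
  rw [dyadicCell_succ_two_mul, dyadicCell_succ_two_mul_add_one, union_sdiff_cancel (hsub _)]

theorem pairwise_disjoint_dyadicCell (n : ℕ) : Pairwise (Disjoint on dyadicCell h B n) := by
  induction n with
  | zero =>
    intro j k hjk
    simp only [Function.onFun, dyadicCell]
    split_ifs <;> simp_all
  | succ n ih =>
    intro j k hjk
    by_cases hpar : j / 2 = k / 2
    · simp only [Function.onFun, dyadicCell, hpar]
      split_ifs <;> first | omega | exact disjoint_sdiff_right | exact disjoint_sdiff_left
    · exact (ih hpar).mono (dyadicCell_succ_subset hsub n j) (dyadicCell_succ_subset hsub n k)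

theorem dyadicCell_inter_rademacherSet (n j : ℕ) :
    dyadicCell h B n j ∩ rademacherSet h B n = h (dyadicCell h B n j) := by
  refine Subset.antisymm (fun x ⟨hxj, hx⟩ => ?_) fun x hx => ⟨hsub _ hx, mem_iUnion.2 ⟨j, hx⟩⟩
  obtain ⟨k, hxk⟩ := mem_iUnion.1 hx
  obtain rfl : k = j := by_contra fun hkj =>
    (pairwise_disjoint_dyadicCell hsub n hkj).notMem_of_mem_left (hsub _ hxk) hxj
  exact hxk

theorem rademacherSet_subset (n : ℕ) : rademacherSet h B n ⊆ B :=
  iUnion_subset fun j => (hsub _).trans (dyadicCell_subset hsub n j)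

end Subset

end DyadicCells

section RademacherSets

variable {h : Set Ω → Set Ω} {A B : Set Ω} {S : Set (Set Ω)} (hS : IsSubSigmaAlgebraOn A S)
  (hmem : ∀ C ∈ S, h C ∈ S) (hB : B ∈ S)
include hS hmem hB

theorem dyadicCell_mem (n j : ℕ) : dyadicCell h B n j ∈ S := by
  induction n generalizing j with
  | zero => simp only [dyadicCell]; split_ifs; exacts [hB, hS.empty_mem]
  | succ n ih =>
    simp only [dyadicCell]
    split_ifs
    exacts [hmem _ (ih _), hS.sdiff_mem (ih _) (hmem _ (ih _))]

theorem rademacherSet_mem (n : ℕ) : rademacherSet h B n ∈ S :=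
  hS.iUnion_mem _ fun j => hmem _ (dyadicCell_mem hS hmem hB n j)

variable {μ : Measure Ω} (hsub : ∀ C, h C ⊆ C) (hhalf : ∀ C ∈ S, μ (h C) = μ C / 2)
include hsub hhalf

theorem measure_dyadicCell_inter_rademacherSet (m d j : ℕ) :
    μ (dyadicCell h B m j ∩ rademacherSet h B (m + d)) = μ (dyadicCell h B m j) / 2 := by
  have hmeas : ∀ n j, MeasurableSet (dyadicCell h B n j) := fun n j =>
    hS.measurable _ (dyadicCell_mem hS hmem hB n j)
  induction d generalizing m j with
  | zero =>
    rw [add_zero, dyadicCell_inter_rademacherSet hsub, hhalf _ (dyadicCell_mem hS hmem hB m j)]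
  | succ d ih =>
    rw [← dyadicCell_succ_union hsub m j, union_inter_distrib_right,
      measure_union (((pairwise_disjoint_dyadicCell hsub _ (by omega)).mono inter_subset_left
        inter_subset_left)) ((hmeas _ _).inter (hS.measurable _ (rademacherSet_mem hS hmem hB _))),
      measure_union (pairwise_disjoint_dyadicCell hsub _ (by omega)) (hmeas _ _),
      show m + (d + 1) = m + 1 + d by omega, ih, ih, ENNReal.add_div]

theorem isIndepHalves_rademacherSet : IsIndepHalves μ B (rademacherSet h B) := by
  have hmeas : ∀ n, MeasurableSet (rademacherSet h B n) := fun n =>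
    hS.measurable _ (rademacherSet_mem hS hmem hB n)
  have hhalf' : ∀ n, μ (rademacherSet h B n) = μ B / 2 := fun n => by
    simpa [dyadicCell, inter_eq_right.2 (rademacherSet_subset hsub n)] using
      measure_dyadicCell_inter_rademacherSet hS hmem hB hsub hhalf 0 n 0
  have hlt : ∀ i j, i < j → μ (rademacherSet h B i ∩ rademacherSet h B j) = μ B / 4 := by
    intro i j hij
    have hcell : ∀ k, MeasurableSet (dyadicCell h B i k) := fun k =>
      hS.measurable _ (dyadicCell_mem hS hmem hB i k)
    rw [rademacherSet, measure_iUnion_inter_eq_half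
      (fun k l hkl => (pairwise_disjoint_dyadicCell hsub i hkl).mono (hsub _) (hsub _))
      (fun k => hS.measurable _ (hmem _ (dyadicCell_mem hS hmem hB i k))) (hmeas j) fun k => ?_]
    · rw [← rademacherSet, hhalf' i, div_eq_mul_inv, div_eq_mul_inv, div_eq_mul_inv, mul_assoc,
        ← ENNReal.mul_inv (by simp) (by simp)]
      norm_num
    · rw [← dyadicCell_succ_two_mul (h := h) (B := B), show j = i + 1 + (j - (i + 1)) by omega,
        measure_dyadicCell_inter_rademacherSet hS hmem hB hsub hhalf]
  refine ⟨hmeas, rademacherSet_subset hsub, hhalf', fun i j hij => hij.lt_or_gt.elim (hlt i j) ?_⟩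
  intro hji
  simpa only [inter_comm] using hlt j i hji

end RademacherSets

theorem NonatomicOn.exists_isIndepHalves {μ : Measure Ω} [IsFiniteMeasure μ] {A B : Set Ω}
    {S : Set (Set Ω)} (hS : IsSubSigmaAlgebraOn A S) (hNA : NonatomicOn μ S) (hB : B ∈ S) :
    ∃ R, IsIndepHalves μ B R ∧ ∀ n, R n ∈ S := by
  have hsplit : ∀ C, ∃ D ⊆ C, C ∈ S → D ∈ S ∧ μ D = μ C / 2 := by
    intro C
    by_cases hC : C ∈ S
    · obtain ⟨D, hD, hDC, hμD⟩ := hNA.exists_mem_subset_measure_eq hS hC ENNReal.half_le_self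
      exact ⟨D, hDC, fun _ => ⟨hD, hμD⟩⟩
    · exact ⟨∅, empty_subset _, fun h => absurd h hC⟩
  choose h hsub hh using hsplit
  have hmem : ∀ C ∈ S, h C ∈ S := fun C hC => (hh C hC).1
  exact ⟨rademacherSet h B, isIndepHalves_rademacherSet hS hmem hB hsub fun C hC => (hh C hC).2,
    rademacherSet_mem hS hmem hB⟩

theorem IsIndepHalves.measure_sdiff {μ : Measure Ω} [IsFiniteMeasure μ] {B : Set Ω}
    {R : ℕ → Set Ω} (hR : IsIndepHalves μ B R) (n : ℕ) : μ (B \ R n) = μ B / 2 := by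
  rw [MeasureTheory.measure_sdiff (hR.subset n) (hR.measurableSet n).nullMeasurableSet
    (measure_ne_top μ _), hR.measure_eq, ENNReal.sub_half (measure_ne_top μ B)]

theorem eLpNorm_le_eLpNorm_one_rpow {E : Type*} [NormedAddCommGroup E] {μ : Measure Ω}
    {p : ℝ≥0∞} {f : Ω → E} (hp1 : 1 ≤ p) (hp : p ≠ ∞) (hf : ∀ᵐ x ∂μ, ‖f x‖ ≤ 1) :
    eLpNorm f p μ ≤ eLpNorm f 1 μ ^ p.toReal⁻¹ := by
  have hp1' : 1 ≤ p.toReal := by simpa using ENNReal.toReal_mono hp hp1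
  rw [eLpNorm_eq_lintegral_rpow_enorm_toReal (zero_lt_one.trans_le hp1).ne' hp,
    eLpNorm_one_eq_lintegral_enorm, one_div]
  refine ENNReal.rpow_le_rpow (lintegral_mono_ae (hf.mono fun x hx =>
    ENNReal.rpow_le_self_of_le_one ?_ hp1')) (by positivity)
  rw [← ofReal_norm]
  exact ENNReal.ofReal_le_one.2 hx

theorem Lp.norm_le_norm_rpow_of_ae_eq {E : Type*} [NormedAddCommGroup E] {μ : Measure Ω}
    [IsProbabilityMeasure μ] {p : ℝ≥0∞} [Fact (1 ≤ p)] (hp : p ≠ ∞) {f : Lp E p μ}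
    {g : Lp E 2 μ} (hfg : f =ᵐ[μ] g) (hf : ∀ᵐ x ∂μ, ‖f x‖ ≤ 1) : ‖f‖ ≤ ‖g‖ ^ p.toReal⁻¹ := by
  have h : eLpNorm f p μ ≤ eLpNorm g 2 μ ^ p.toReal⁻¹ := calc
    eLpNorm f p μ ≤ eLpNorm f 1 μ ^ p.toReal⁻¹ := eLpNorm_le_eLpNorm_one_rpow Fact.out hp hf
    _ ≤ eLpNorm f 2 μ ^ p.toReal⁻¹ := by
      gcongr
      exact eLpNorm_le_eLpNorm_of_exponent_le one_le_two (Lp.aestronglyMeasurable f)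
    _ = eLpNorm g 2 μ ^ p.toReal⁻¹ := by rw [eLpNorm_congr_ae hfg]
  rw [Lp.norm_def, Lp.norm_def, ENNReal.toReal_rpow]
  exact ENNReal.toReal_mono (ENNReal.rpow_ne_top_of_nonneg (by positivity) (Lp.eLpNorm_ne_top g)) h

theorem indicator_one_sub_indicator_one_sdiff_mem_Icc {α : Type*} {B R : Set α} (x : α) :
    (R.indicator 1 - (B \ R).indicator 1 : α → ℝ) x ∈ Icc (-1) 1 := by
  by_cases hxR : x ∈ R <;> by_cases hxB : x ∈ B <;> simp [hxR, hxB]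

section Signs

variable {μ : Measure Ω} [IsFiniteMeasure μ] {B R R' : Set Ω}

def signLp (p : ℝ≥0∞) [Fact (1 ≤ p)] (μ : Measure Ω) [IsFiniteMeasure μ]
    (hB : MeasurableSet B) (hR : MeasurableSet R) : Lp ℝ p μ :=
  indicatorConstLp p hR (measure_ne_top μ R) 1 -
    indicatorConstLp p (hB.diff hR) (measure_ne_top μ _) 1

variable {p : ℝ≥0∞} [Fact (1 ≤ p)] {hB : MeasurableSet B} {hR : MeasurableSet R}

theorem isSignIn_signLp {A : Set Ω} {S : Set (Set Ω)} (hS : IsSubSigmaAlgebraOn A S)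
    (hBS : B ∈ S) (hRS : R ∈ S) (hRB : R ⊆ B) (hμ : μ R = μ (B \ R)) :
    IsSignIn μ p (signLp p μ hB hR) B S :=
  ⟨R, hRS, B \ R, hS.sdiff_mem hBS hRS, hR, hB.diff hR, disjoint_sdiff_right,
    union_sdiff_cancel hRB, hμ, rfl⟩

theorem coeFn_signLp : signLp p μ hB hR =ᵐ[μ] R.indicator 1 - (B \ R).indicator 1 :=
  (Lp.coeFn_sub _ _).trans (indicatorConstLp_coeFn.sub indicatorConstLp_coeFn)

theorem signLp_eq_two_smul_sub (hRB : R ⊆ B) :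
    signLp p μ hB hR = (2 : ℝ) • indicatorConstLp p hR (measure_ne_top μ R) 1 -
      indicatorConstLp p hB (measure_ne_top μ B) 1 := by
  have hsplit := indicatorConstLp_disjoint_union (p := p) hR (hB.diff hR) (measure_ne_top μ R)
    (measure_ne_top μ _) disjoint_sdiff_right (1 : ℝ)
  simp only [union_sdiff_cancel hRB] at hsplit
  rw [signLp, hsplit, two_smul]
  abel

theorem inner_signLp_signLp {hR' : MeasurableSet R'} (hRB : R ⊆ B) (hR'B : R' ⊆ B) :
    inner ℝ (signLp 2 μ hB hR) (signLp 2 μ hB hR') =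
      μ.real B - 2 * μ.real R - 2 * μ.real R' + 4 * μ.real (R ∩ R') := by
  simp only [signLp_eq_two_smul_sub hRB, signLp_eq_two_smul_sub hR'B, inner_sub_left,
    inner_sub_right, real_inner_smul_left, real_inner_smul_right,
    L2.real_inner_indicatorConstLp_one_indicatorConstLp_one, inter_eq_left.2 hRB,
    inter_eq_right.2 hR'B, inter_self]
  ring

end Signs

namespace IsIndepHalves

variable {μ : Measure Ω} [IsFiniteMeasure μ] {B : Set Ω} {R : ℕ → Set Ω}
  (hR : IsIndepHalves μ B R) (hB : MeasurableSet B)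
include hR

theorem inner_signLp (i j : ℕ) :
    inner ℝ (signLp 2 μ hB (hR.measurableSet i)) (signLp 2 μ hB (hR.measurableSet j)) =
      if i = j then μ.real B else 0 := by
  rw [inner_signLp_signLp (hR.subset i) (hR.subset j)]
  split_ifs with hij
  · subst hij
    rw [inter_self]
    ring
  · simp only [measureReal_def, hR.measure_eq, hR.measure_inter hij, ENNReal.toReal_div]
    norm_num
    ring

theorem norm_sum_signLp_sq (J : Finset ℕ) :
    ‖∑ n ∈ J, signLp 2 μ hB (hR.measurableSet n)‖ ^ 2 = J.card * μ.real B := by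
  rw [← real_inner_self_eq_norm_sq, sum_inner]
  simp_rw [inner_sum, hR.inner_signLp hB, Finset.sum_ite_eq, Finset.sum_ite_mem, Finset.inter_self,
    Finset.sum_const, nsmul_eq_mul]

theorem norm_average_signLp_le [IsProbabilityMeasure μ] {p : ℝ≥0∞} [Fact (1 ≤ p)] (hp : p ≠ ∞)
    {J : Finset ℕ} (hJ : J.Nonempty) :
    ‖∑ n ∈ J, (J.card : ℝ)⁻¹ • signLp p μ hB (hR.measurableSet n)‖ ≤
      (√(J.card : ℝ))⁻¹ ^ p.toReal⁻¹ := by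
  have hK : (0 : ℝ) < J.card := by exact_mod_cast hJ.card_pos
  set F : Ω → ℝ := ∑ n ∈ J, (J.card : ℝ)⁻¹ • ((R n).indicator 1 - (B \ R n).indicator 1)
  have hF : ∀ (q : ℝ≥0∞) [Fact (1 ≤ q)],
      ⇑(∑ n ∈ J, (J.card : ℝ)⁻¹ • signLp q μ hB (hR.measurableSet n)) =ᵐ[μ] F := fun q _ =>
    (Lp.coeFn_finsetSum _ _).trans
      (eventuallyEq_sum fun n _ => (Lp.coeFn_smul _ _).trans (coeFn_signLp.const_smul _))
  have hF1 : ∀ x, ‖F x‖ ≤ 1 := fun x => by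
    rw [Real.norm_eq_abs, abs_le, ← mem_Icc]
    simp only [F, Finset.sum_apply, Pi.smul_apply]
    refine (convex_Icc (-1 : ℝ) 1).sum_mem (fun _ _ => by positivity) ?_
      fun n _ => indicator_one_sub_indicator_one_sdiff_mem_Icc x
    rw [Finset.sum_const, nsmul_eq_mul, mul_inv_cancel₀ hK.ne']
  have h2 : ‖∑ n ∈ J, (J.card : ℝ)⁻¹ • signLp 2 μ hB (hR.measurableSet n)‖ ≤ (√(J.card : ℝ))⁻¹ := by
    rw [← pow_le_pow_iff_left₀ (norm_nonneg _) (by positivity) two_ne_zero, ← Finset.smul_sum,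
      norm_smul, mul_pow, hR.norm_sum_signLp_sq hB, inv_pow, Real.sq_sqrt hK.le, norm_inv,
      Real.norm_natCast, inv_pow, sq, mul_inv, mul_assoc, inv_mul_cancel_left₀ hK.ne']
    calc (J.card : ℝ)⁻¹ * μ.real B ≤ (J.card : ℝ)⁻¹ * 1 := by gcongr; exact measureReal_le_one
      _ = _ := mul_one _
  calc _ ≤ ‖∑ n ∈ J, (J.card : ℝ)⁻¹ • signLp 2 μ hB (hR.measurableSet n)‖ ^ p.toReal⁻¹ :=
        Lp.norm_le_norm_rpow_of_ae_eq hp ((hF p).trans (hF 2).symm)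
          ((hF p).mono fun x hx => hx ▸ hF1 x)
    _ ≤ _ := by gcongr

end IsIndepHalves

theorem CompactOp.exists_norm_apply_le {E F : Type*} [NormedAddCommGroup E] [NormedSpace ℝ E]
    [NormedAddCommGroup F] [NormedSpace ℝ F] {T : E →L[ℝ] F} (hT : CompactOp T) {x : ℕ → E}
    {c : ℕ → ℝ} (hc : Tendsto c atTop (𝓝 0))
    (havg : ∀ J : Finset ℕ, J.Nonempty → ‖∑ n ∈ J, (J.card : ℝ)⁻¹ • x n‖ ≤ c J.card)
    {ε : ℝ} (hε : 0 < ε) : ∃ n, ‖T (x n)‖ ≤ ε := by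
  have hx : ∀ n, x n ∈ Metric.closedBall 0 (c 1) := fun n => by
    simpa using havg {n} (Finset.singleton_nonempty n)
  obtain ⟨y, -, φ, hφ, hlim⟩ := (hT _ Metric.isBounded_closedBall).tendsto_subseq
    fun n => subset_closure (mem_image_of_mem T (hx n))
  obtain ⟨N, hN⟩ := eventually_atTop.1
    (hlim.eventually (Metric.closedBall_mem_nhds y (by positivity : 0 < ε / 3)))
  have hTc : Tendsto (fun K => ‖T‖ * c K) atTop (𝓝 0) := by simpa using hc.const_mul ‖T‖
  obtain ⟨K, hKc, hK⟩ :=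
    ((hTc.eventually (gt_mem_nhds (by positivity : 0 < ε / 3))).and (eventually_gt_atTop 0)).exists
  set J := (Finset.range K).image fun i => φ (N + i)
  have hJ : J.card = K :=
    (Finset.card_image_of_injective _ (hφ.injective.comp (add_right_injective N))).trans
      (Finset.card_range K)
  set z := ∑ n ∈ J, (K : ℝ)⁻¹ • T (x n)
  have hzy : dist z y ≤ ε / 3 := by
    refine (convex_closedBall y (ε / 3)).sum_mem (fun _ _ => by positivity) ?_ fun n hn => ?_
    · rw [Finset.sum_const, hJ, nsmul_eq_mul, mul_inv_cancel₀ (Nat.cast_ne_zero.2 hK.ne')]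
    · obtain ⟨i, -, rfl⟩ := Finset.mem_image.1 hn
      exact hN (N + i) le_self_add
  have hz : ‖z‖ ≤ ε / 3 := by
    have hJne : J.Nonempty := Finset.card_pos.1 (hJ ▸ hK)
    calc ‖z‖ = ‖T (∑ n ∈ J, (J.card : ℝ)⁻¹ • x n)‖ := by simp [z, hJ]
      _ ≤ ‖T‖ * c K := (T.le_opNorm _).trans (by gcongr; exact hJ ▸ havg J hJne)
      _ ≤ ε / 3 := hKc.le
  refine ⟨φ N, ?_⟩
  calc ‖T (x (φ N))‖ ≤ dist (T (x (φ N))) y + dist y z + ‖z‖ := by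
        simpa only [dist_zero_right] using dist_triangle4 (T (x (φ N))) y z 0
    _ ≤ ε / 3 + ε / 3 + ε / 3 := by
        gcongr
        · exact hN N le_rfl
        · rwa [dist_comm]
    _ = ε := by ring

theorem compactOp_hppNarrow_general
    (μ : Measure Ω) [IsProbabilityMeasure μ]
    (p : ℝ≥0∞) [Fact (1 ≤ p)] (hp : p ≠ ∞)
    {X : Type*} [NormedAddCommGroup X] [NormedSpace ℝ X]
    (T : Lp ℝ p μ →L[ℝ] X) (hT : CompactOp T) :
    HPPNarrow μ p T := by
  intro A _ _ S hS hNA B hBS _ ε hε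
  obtain ⟨R, hR, hRS⟩ := hNA.exists_isIndepHalves hS hBS
  have hB := hS.measurable B hBS
  have hp0 : p.toReal⁻¹ ≠ 0 :=
    inv_ne_zero (ENNReal.toReal_pos (zero_lt_one.trans_le Fact.out).ne' hp).ne'
  have hrate : Tendsto (fun K : ℕ => (√(K : ℝ))⁻¹ ^ p.toReal⁻¹) atTop (𝓝 0) := by
    simpa [Real.zero_rpow hp0] using (tendsto_inv_atTop_zero.comp (Real.tendsto_sqrt_atTop.comp
      tendsto_natCast_atTop_atTop)).rpow_const (p := p.toReal⁻¹) (.inr (by positivity))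
  obtain ⟨n, hn⟩ :=
    hT.exists_norm_apply_le hrate (fun J hJ => hR.norm_average_signLp_le hB hp hJ) hε
  exact ⟨_, isSignIn_signLp hS hBS (hRS n) (hR.subset n) ((hR.measure_eq n).trans
    (hR.measure_sdiff n).symm), hn⟩

/-- Over a nonatomic probability space `(Ω, Σ, μ)` and `1 ≤ p < ∞`,
every compact bounded linear operator `T : L_p(μ) → X` into a Banach space is
hereditarily PP-narrow. -/
theorem compactOp_hppNarrow
    (μ : Measure Ω) [IsProbabilityMeasure μ] [NullSingletonClass μ]
    (p : ℝ≥0∞) [Fact (1 ≤ p)] (hp : p ≠ ∞)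
    {X : Type*} [NormedAddCommGroup X] [NormedSpace ℝ X] [CompleteSpace X]
    (T : Lp ℝ p μ →L[ℝ] X) (hT : CompactOp T) :
    HPPNarrow μ p T :=
  compactOp_hppNarrow_general μ p hp T hT
end
end

section
/- Let 1 ≤ p < ∞ and let T: L_p → X be a PP-narrow operator into a Banach space X. Then for every A ∈ Σ⁺ and every family (ε_α)_{α ∈ 𝒜_∞} of positive numbers there is a Haar-like system {h_α : α ∈ 𝒜_∞} on A such that ‖Th_α‖ ≤ ε_α for every α ∈ 𝒜_∞. -/
open MeasureTheory ENNReal Set Filter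

noncomputable section

variable {Ω : Type*} [MeasurableSpace Ω]

/-- A *tree of subsets* on `A`, indexed by finite ±1-tuples (modelled as `List Bool`,
`true ↔ 1`, `false ↔ -1`): `t [] = A` and for every `α` the sets `t (α ++ [true])` and
`t (α ++ [false])` form a partition of `t α` into two measurable subsets of equal measure. -/
structure IsTreeOn (μ : Measure Ω) (A : Set Ω) (t : List Bool → Set Ω) : Prop where
  root : t [] = A
  meas : ∀ α, MeasurableSet (t α)
  disj : ∀ α, Disjoint (t (α ++ [true])) (t (α ++ [false]))
  union : ∀ α, t (α ++ [true]) ∪ t (α ++ [false]) = t α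
  eqmeas : ∀ α, μ (t (α ++ [true])) = μ (t (α ++ [false]))

/-- The *Haar-like system* corresponding to a tree of subsets:
`h_α = χ_{A_{α,1}} - χ_{A_{α,-1}}`, as an element of `L_p(μ)`. -/
def haarFn (μ : Measure Ω) [IsFiniteMeasure μ] (p : ℝ≥0∞) [Fact (1 ≤ p)]
    (t : List Bool → Set Ω) (ht : ∀ α, MeasurableSet (t α)) (α : List Bool) : Lp ℝ p μ :=
  indicatorConstLp p (ht (α ++ [true])) (measure_ne_top μ _) (1 : ℝ) -
  indicatorConstLp p (ht (α ++ [false])) (measure_ne_top μ _) (1 : ℝ)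

/-! The children of each node are chosen greedily, one node at a time: PP-narrowness splits
any set of positive measure into halves whose sign has image of norm at most `ε_α`, and a null
set is split trivially, its sign being `0` in `L_p`. -/

section BinaryTree

variable {β : Type*}

/-- The nodes are computed from the reversed address, so that the child `α ++ [b]` is reached
by structural recursion on `b :: α.reverse`. -/
def treeOfChildren (g : List Bool → β → Bool → β) (a : β) (α : List Bool) : β :=
  go α.reverse
where
  go : List Bool → β
    | [] => a
    | b :: ρ => g ρ.reverse (go ρ) b

theorem treeOfChildren_append_singleton (g : List Bool → β → Bool → β) (a : β)
    (α : List Bool) (b : Bool) :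
    treeOfChildren g a (α ++ [b]) = g α (treeOfChildren g a α) b := by
  simp [treeOfChildren, treeOfChildren.go]

theorem exists_tree_of_forall_exists_children (a : β) (P : List Bool → β → β → β → Prop)
    (h : ∀ α x, ∃ y z, P α x y z) :
    ∃ t : List Bool → β, t [] = a ∧ ∀ α, P α (t α) (t (α ++ [true])) (t (α ++ [false])) := by
  choose y z hyz using h
  refine ⟨treeOfChildren (fun α x b ↦ if b then y α x else z α x) a, rfl, fun α ↦ ?_⟩
  simp only [treeOfChildren_append_singleton, if_true, Bool.false_eq_true, if_false]
  exact hyz α _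

end BinaryTree

section Sign

variable {μ : Measure Ω} [IsFiniteMeasure μ] {p : ℝ≥0∞} [Fact (1 ≤ p)]

theorem isSignOn_zero_of_measure_eq_zero {S : Set Ω} (hS : MeasurableSet S) (h0 : μ S = 0) :
    IsSignOn μ p 0 S := by
  refine ⟨S, ∅, hS, .empty, disjoint_bot_right, union_empty S, by simp [h0], ?_⟩
  have hS_ae : S =ᵐ[μ] (∅ : Set Ω) := ae_eq_empty.2 h0
  rw [(indicatorConstLp_inj hS _ .empty (measure_ne_top μ ∅) one_ne_zero).2 hS_ae, sub_self]

theorem PPNarrow.exists_isSignOn_norm_le {X : Type*} [NormedAddCommGroup X] [NormedSpace ℝ X]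
    {T : Lp ℝ p μ →L[ℝ] X} (hT : PPNarrow μ p T) {S : Set Ω} (hS : MeasurableSet S)
    {e : ℝ} (he : 0 < e) : ∃ f, IsSignOn μ p f S ∧ ‖T f‖ ≤ e := by
  rcases eq_zero_or_pos (μ S) with h0 | hpos
  · exact ⟨0, isSignOn_zero_of_measure_eq_zero hS h0, by simpa using he.le⟩
  · exact hT S hS hpos e he

end Sign

theorem ppNarrow_exists_haarLike_small_general
    (μ : Measure Ω) [IsProbabilityMeasure μ]
    (p : ℝ≥0∞) [Fact (1 ≤ p)]
    {X : Type*} [NormedAddCommGroup X] [NormedSpace ℝ X]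
    (T : Lp ℝ p μ →L[ℝ] X) (hT : PPNarrow μ p T)
    (A : Set Ω) (hA : MeasurableSet A)
    (ε : List Bool → ℝ) (hε : ∀ α, 0 < ε α) :
    ∃ t : List Bool → Set Ω, ∃ ht : IsTreeOn μ A t,
      ∀ α : List Bool, ‖T (haarFn μ p t ht.meas α)‖ ≤ ε α := by
  obtain ⟨t, ht_root, ht_split⟩ := exists_tree_of_forall_exists_children
    (β := {S : Set Ω // MeasurableSet S}) ⟨A, hA⟩
    (fun α S B₁ B₂ ↦ Disjoint B₁.1 B₂.1 ∧ B₁.1 ∪ B₂.1 = S.1 ∧ μ B₁ = μ B₂ ∧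
      ‖T (indicatorConstLp p B₁.2 (measure_ne_top μ _) 1 -
        indicatorConstLp p B₂.2 (measure_ne_top μ _) 1)‖ ≤ ε α)
    (fun α S ↦ by
      obtain ⟨_, ⟨B₁, B₂, h₁, h₂, hdisj, hunion, hμ, rfl⟩, hnorm⟩ :=
        hT.exists_isSignOn_norm_le S.2 (hε α)
      exact ⟨⟨B₁, h₁⟩, ⟨B₂, h₂⟩, hdisj, hunion, hμ, hnorm⟩)
  exact ⟨fun α ↦ (t α).1,
    ⟨congrArg Subtype.val ht_root, fun α ↦ (t α).2, fun α ↦ (ht_split α).1,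
      fun α ↦ (ht_split α).2.1, fun α ↦ (ht_split α).2.2.1⟩,
    fun α ↦ (ht_split α).2.2.2⟩

/-- Lemma 2.4(a). If `T : L_p(μ) → X` is PP-narrow, then for every
`A` of nonzero measure and every family `(ε_α)_{α ∈ 𝒜_∞}` of positive numbers there is
a Haar-like system `(h_α)` on `A` with `‖T h_α‖ ≤ ε_α` for all `α`. -/
theorem ppNarrow_exists_haarLike_small
    (μ : Measure Ω) [IsProbabilityMeasure μ] [NullSingletonClass μ]
    (p : ℝ≥0∞) [Fact (1 ≤ p)] (hp : p ≠ ∞)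
    {X : Type*} [NormedAddCommGroup X] [NormedSpace ℝ X] [CompleteSpace X]
    (T : Lp ℝ p μ →L[ℝ] X) (hT : PPNarrow μ p T)
    (A : Set Ω) (hA : MeasurableSet A) (hA0 : 0 < μ A)
    (ε : List Bool → ℝ) (hε : ∀ α, 0 < ε α) :
    ∃ t : List Bool → Set Ω, ∃ ht : IsTreeOn μ A t,
      ∀ α : List Bool, ‖T (haarFn μ p t ht.meas α)‖ ≤ ε α :=
  ppNarrow_exists_haarLike_small_general μ p T hT A hA ε hε
end
end

section
/- Let 1 ≤ p < ∞, X a Banach space, and U, V: L_p → X bounded linear operators. If U is PP-narrow and V is hereditarily PP-narrow, then U + V is PP-narrow. -/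
open MeasureTheory ENNReal Set Filter

noncomputable section

variable {Ω : Type*} [MeasurableSpace Ω]

/-!
Using the PP-narrowness of `U`, split `A` dyadically so that `U` is tiny on the Haar function of
every cell, with errors summable over the tree. Peeling off one level of Haar functions at a time,
`U 1_B` is then close to `(μ B / μ A) • U 1_A` whenever `B` is a finite union of cells, and by
density whenever `B` lies in the σ-algebra generated by the cells. That σ-algebra is nonatomic, so
`V` is small on some sign `1_{B₁} - 1_{B₂}` with `B₁`, `B₂` in it, and since `μ B₁ = μ B₂`
the two approximations `(μ Bᵢ / μ A) • U 1_A` cancel: `U` is small on that sign as well.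
-/

open MeasurableSpace (generateFrom measurableSet_generateFrom generateFrom_le)
open scoped symmDiff Topology

lemma sum_two_pow_mul_div_four_pow_le {c : ℝ} (hc : 0 ≤ c) (n : ℕ) :
    ∑ k ∈ Finset.range n, 2 ^ k * (c / 4 ^ k) ≤ 2 * c := by
  have hterm : ∀ k, (2 : ℝ) ^ k * (c / 4 ^ k) = c * (1 / 2) ^ k := fun k => by
    rw [show (4 : ℝ) ^ k = 2 ^ k * 2 ^ k by rw [← mul_pow]; norm_num, one_div_pow]
    field_simp
  rw [Finset.sum_congr rfl fun k _ => hterm k, ← Finset.mul_sum, mul_comm]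
  exact mul_le_mul_of_nonneg_right (sum_geometric_two_le n) hc

lemma indicatorConstLp_biUnion_finset {ι E : Type*} [NormedAddCommGroup E] {μ : Measure Ω}
    [IsFiniteMeasure μ] (p : ℝ≥0∞) (F : Finset ι) {f : ι → Set Ω}
    (hf : ∀ i, MeasurableSet (f i)) (hd : (F : Set ι).PairwiseDisjoint f) (c : E) :
    indicatorConstLp p (F.measurableSet_biUnion fun i _ => hf i) (measure_ne_top μ _) c =
      ∑ i ∈ F, indicatorConstLp p (hf i) (measure_ne_top μ _) c := by
  classical
  induction F using Finset.induction_on with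
  | empty => simp
  | insert a F ha ih =>
    rw [Finset.coe_insert, Set.pairwiseDisjoint_insert] at hd
    rw [Finset.sum_insert ha, ← ih hd.1, ← indicatorConstLp_disjoint_union]
    · simp only [Finset.set_biUnion_insert]
    · exact Set.disjoint_iUnion₂_right.2 fun i hi => hd.2 i hi fun h => ha (h ▸ hi)

namespace DyadicTree

def children (F : Finset (List Bool)) : Finset (List Bool) :=
  F.biUnion fun s => {false :: s, true :: s}

def level : ℕ → Finset (List Bool)
  | 0 => {[]}
  | n + 1 => children (level n)

lemma pairwiseDisjoint_children (F : Finset (List Bool)) :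
    (F : Set (List Bool)).PairwiseDisjoint fun s => ({false :: s, true :: s} : Finset _) := by
  intro s _ t _ hst
  simp only [Function.onFun, Finset.disjoint_left, Finset.mem_insert, Finset.mem_singleton]
  rintro a (rfl | rfl) <;> rintro (h | h) <;> simp_all

lemma mem_children {F : Finset (List Bool)} {u : List Bool} :
    u ∈ children F ↔ ∃ b s, s ∈ F ∧ u = b :: s := by
  simp only [children, Finset.mem_biUnion, Finset.mem_insert, Finset.mem_singleton]
  constructor
  · rintro ⟨s, hs, rfl | rfl⟩ <;> exact ⟨_, s, hs, rfl⟩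
  · rintro ⟨b, s, hs, rfl⟩
    exact ⟨s, hs, by cases b <;> simp⟩

lemma sum_children {M : Type*} [AddCommMonoid M] (F : Finset (List Bool)) (g : List Bool → M) :
    ∑ s ∈ children F, g s = ∑ s ∈ F, (g (false :: s) + g (true :: s)) := by
  rw [children, Finset.sum_biUnion (pairwiseDisjoint_children F)]
  exact Finset.sum_congr rfl fun s _ => Finset.sum_pair (by simp)

lemma card_level (n : ℕ) : (level n).card = 2 ^ n := by
  induction n with
  | zero => rfl
  | succ n ih =>
    rw [level, children, Finset.card_biUnion (pairwiseDisjoint_children _),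
      Finset.sum_congr rfl fun s _ => Finset.card_pair (by simp), Finset.sum_const, ih,
      smul_eq_mul, pow_succ]

lemma mem_level {n : ℕ} {s : List Bool} : s ∈ level n ↔ s.length = n := by
  induction n generalizing s with
  | zero => simp [level]
  | succ n ih =>
    rw [level, mem_children]
    constructor
    · rintro ⟨b, t, ht, rfl⟩
      simp [ih.1 ht]
    · rcases s with _ | ⟨b, t⟩
      · simp
      · intro hs
        exact ⟨b, t, ih.2 (by simpa using hs), rfl⟩

end DyadicTree

/-- Paths are read from the leaf: `cell (b :: s)` is the half `b` of `cell s`. -/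
structure DyadicTree (μ : Measure Ω) (A : Set Ω) where
  cell : List Bool → Set Ω
  measurableSet_cell (s : List Bool) : MeasurableSet (cell s)
  cell_nil : cell [] = A
  cell_false_union_cell_true (s : List Bool) : cell (false :: s) ∪ cell (true :: s) = cell s
  disjoint_cell_false_cell_true (s : List Bool) : Disjoint (cell (false :: s)) (cell (true :: s))
  measure_cell (s : List Bool) : μ (cell s) = μ A / 2 ^ s.length

namespace DyadicTree

variable {μ : Measure Ω} {A : Set Ω} (T : DyadicTree μ A)

theorem exists_of_halving (hA : MeasurableSet A) (hA0 : 0 < μ A)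
    {P : ℕ → (Bool → Set Ω) → Prop}
    (h : ∀ n B, MeasurableSet B → 0 < μ B → ∃ C : Bool → Set Ω,
      (∀ b, MeasurableSet (C b)) ∧ Disjoint (C false) (C true) ∧ C false ∪ C true = B ∧
        (∀ b, μ (C b) = μ B / 2) ∧ P n C) :
    ∃ T : DyadicTree μ A, ∀ s, P s.length fun b => T.cell (b :: s) := by
  choose! split hsplit using h
  let cell : List Bool → Set Ω := fun l => l.rec A fun b s C => split s.length C b
  have hpos : ∀ n, 0 < μ A / 2 ^ n := fun n =>
    ENNReal.div_pos hA0.ne' (ENNReal.pow_ne_top ofNat_ne_top)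
  have hcell : ∀ s, MeasurableSet (cell s) ∧ μ (cell s) = μ A / 2 ^ s.length := by
    intro s
    induction s with
    | nil => exact ⟨hA, by simp [cell]⟩
    | cons b s ih =>
      obtain ⟨hC, -, -, hμ, -⟩ := hsplit s.length (cell s) ih.1 (ih.2 ▸ hpos _)
      refine ⟨hC b, ?_⟩
      rw [show cell (b :: s) = split s.length (cell s) b from rfl, hμ, ih.2, List.length_cons,
        pow_succ, div_eq_mul_inv, div_eq_mul_inv, div_eq_mul_inv, mul_assoc,
        ENNReal.mul_inv (by simp) (by simp)]
  have hchildren := fun s => hsplit s.length (cell s) (hcell s).1 ((hcell s).2 ▸ hpos _)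
  exact ⟨⟨cell, fun s => (hcell s).1, rfl, fun s => (hchildren s).2.2.1,
    fun s => (hchildren s).2.1, fun s => (hcell s).2⟩, fun s => (hchildren s).2.2.2.2⟩

lemma cell_cons_subset (b : Bool) (s : List Bool) : T.cell (b :: s) ⊆ T.cell s := by
  rw [← T.cell_false_union_cell_true s]
  cases b
  exacts [subset_union_left, subset_union_right]

lemma cell_subset (s : List Bool) : T.cell s ⊆ A := by
  induction s with
  | nil => exact T.cell_nil.le
  | cons b s ih => exact (T.cell_cons_subset b s).trans ih

lemma biUnion_children (F : Finset (List Bool)) :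
    ⋃ s ∈ children F, T.cell s = ⋃ s ∈ F, T.cell s := by
  simp only [children, Finset.set_biUnion_biUnion, Finset.set_biUnion_insert,
    Finset.set_biUnion_singleton, T.cell_false_union_cell_true]

lemma biUnion_level (n : ℕ) : ⋃ s ∈ level n, T.cell s = A := by
  induction n with
  | zero => simp [level, T.cell_nil]
  | succ n ih => rw [level, biUnion_children, ih]

lemma pairwiseDisjoint_children_of_pairwiseDisjoint {F : Finset (List Bool)}
    (hF : (F : Set (List Bool)).PairwiseDisjoint T.cell) :
    (children F : Set (List Bool)).PairwiseDisjoint T.cell := by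
  rintro _ hu _ hv hne
  obtain ⟨a, s, hs, rfl⟩ := mem_children.1 hu
  obtain ⟨b, t, ht, rfl⟩ := mem_children.1 hv
  by_cases hst : s = t
  · subst hst
    have hab : a ≠ b := fun h => hne (h ▸ rfl)
    cases a <;> cases b <;> simp only [ne_eq, not_true_eq_false] at hab
    exacts [T.disjoint_cell_false_cell_true s, (T.disjoint_cell_false_cell_true s).symm]
  · exact (hF hs ht hst).mono (T.cell_cons_subset a s) (T.cell_cons_subset b t)

lemma pairwiseDisjoint_level (n : ℕ) : (level n : Set (List Bool)).PairwiseDisjoint T.cell := by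
  induction n with
  | zero => simp [level]
  | succ n ih => exact T.pairwiseDisjoint_children_of_pairwiseDisjoint ih

lemma measureReal_biUnion_of_subset_level [IsFiniteMeasure μ] {n : ℕ} {F : Finset (List Bool)}
    (hF : F ⊆ level n) : μ.real (⋃ s ∈ F, T.cell s) = F.card * μ.real A / 2 ^ n := by
  rw [measureReal_biUnion_finset ((T.pairwiseDisjoint_level n).subset hF)
    fun s _ => T.measurableSet_cell s]
  rw [Finset.sum_congr rfl fun s hs => show μ.real (T.cell s) = μ.real A / 2 ^ n by
    rw [measureReal_def, T.measure_cell, mem_level.1 (hF hs), ENNReal.toReal_div,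
      ENNReal.toReal_pow, ENNReal.toReal_ofNat, measureReal_def]]
  rw [Finset.sum_const, nsmul_eq_mul, mul_div_assoc]

lemma exists_subset_level_biUnion_eq {n m : ℕ} (hnm : n ≤ m) {F : Finset (List Bool)}
    (hF : F ⊆ level n) : ∃ G ⊆ level m, ⋃ s ∈ G, T.cell s = ⋃ s ∈ F, T.cell s := by
  induction m, hnm using Nat.le_induction with
  | base => exact ⟨F, hF, rfl⟩
  | succ m _ ih =>
    obtain ⟨G, hG, hGF⟩ := ih
    exact ⟨children G, Finset.biUnion_subset_biUnion_of_subset_left _ hG,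
      by rw [biUnion_children, hGF]⟩

lemma diff_biUnion_eq_biUnion_sdiff {n : ℕ} {F : Finset (List Bool)} (hF : F ⊆ level n) :
    A \ ⋃ s ∈ F, T.cell s = ⋃ s ∈ level n \ F, T.cell s := by
  have hdisj : Disjoint (⋃ s ∈ F, T.cell s) (⋃ s ∈ level n \ F, T.cell s) :=
    Set.disjoint_iUnion₂_left.2 fun s hs => Set.disjoint_iUnion₂_right.2 fun t ht =>
      T.pairwiseDisjoint_level n (hF hs) (Finset.sdiff_subset ht)
        fun h => (Finset.mem_sdiff.1 ht).2 (h ▸ hs)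
  calc A \ ⋃ s ∈ F, T.cell s = (⋃ s ∈ level n, T.cell s) \ ⋃ s ∈ F, T.cell s := by
        rw [T.biUnion_level]
    _ = ⋃ s ∈ level n \ F, T.cell s := by
        conv_lhs => rw [← Finset.union_sdiff_of_subset hF, Finset.set_biUnion_union]
        rw [Set.union_sdiff_left, hdisj.symm.sdiff_eq_left]

lemma exists_inter_eq_biUnion_of_mem_generateSetAlgebra {t : Set Ω}
    (ht : t ∈ generateSetAlgebra (range T.cell)) :
    ∃ n, ∃ F ⊆ level n, t ∩ A = ⋃ s ∈ F, T.cell s := by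
  induction ht with
  | base _ hs =>
    obtain ⟨s, rfl⟩ := hs
    exact ⟨s.length, {s}, by simp [mem_level], by simp [inter_eq_left.2 (T.cell_subset s)]⟩
  | empty => exact ⟨0, ∅, by simp, by simp⟩
  | compl t _ ih =>
    obtain ⟨n, F, hF, htA⟩ := ih
    refine ⟨n, level n \ F, Finset.sdiff_subset, ?_⟩
    rw [← T.diff_biUnion_eq_biUnion_sdiff hF, ← htA, inter_comm, ← sdiff_eq,
      sdiff_inter_self_eq_sdiff]
  | union t₁ t₂ _ _ ih₁ ih₂ =>
    obtain ⟨n₁, F₁, hF₁, ht₁⟩ := ih₁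
    obtain ⟨n₂, F₂, hF₂, ht₂⟩ := ih₂
    obtain ⟨G₁, hG₁, hG₁F⟩ := T.exists_subset_level_biUnion_eq (le_max_left _ _) hF₁
    obtain ⟨G₂, hG₂, hG₂F⟩ := T.exists_subset_level_biUnion_eq (le_max_right _ _) hF₂
    refine ⟨max n₁ n₂, G₁ ∪ G₂, Finset.union_subset hG₁ hG₂, ?_⟩
    rw [union_inter_distrib_right, ht₁, ht₂, ← hG₁F, ← hG₂F, Finset.set_biUnion_union]

def sigmaAlgebra : Set (Set Ω) :=
  {B | MeasurableSet[generateFrom (range T.cell)] B ∧ B ⊆ A}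

lemma generateFrom_range_cell_le :
    generateFrom (range T.cell) ≤ ‹MeasurableSpace Ω› :=
  generateFrom_le (forall_mem_range.2 T.measurableSet_cell)

lemma isSubSigmaAlgebraOn : IsSubSigmaAlgebraOn A T.sigmaAlgebra := by
  have hA : MeasurableSet[generateFrom (range T.cell)] A := by
    have h := measurableSet_generateFrom (mem_range_self (f := T.cell) [])
    rwa [T.cell_nil] at h
  exact
    { measurable := fun B hB => T.generateFrom_range_cell_le _ hB.1
      subset := fun B hB => hB.2
      top_mem := ⟨hA, subset_rfl⟩
      diff_mem := fun B hB => ⟨hA.diff hB.1, sdiff_subset⟩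
      iUnion_mem := fun g hg =>
        ⟨MeasurableSet.iUnion fun n => (hg n).1, iUnion_subset fun n => (hg n).2⟩ }

lemma nonatomicOn [IsFiniteMeasure μ] : NonatomicOn μ T.sigmaAlgebra := by
  rintro B ⟨hBm, hBA⟩ hB
  have hsmall : Tendsto (fun n : ℕ => μ A / 2 ^ n) atTop (𝓝 0) := by
    simpa [div_eq_mul_inv, ENNReal.inv_pow] using ENNReal.Tendsto.const_mul
      (ENNReal.tendsto_pow_atTop_nhds_zero_of_lt_one (by norm_num : (2⁻¹ : ℝ≥0∞) < 1))
      (Or.inr (measure_ne_top μ A))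
  obtain ⟨n, hn⟩ := (hsmall.eventually (gt_mem_nhds hB)).exists
  have hcover : B = ⋃ s ∈ level n, B ∩ T.cell s := by
    rw [← inter_iUnion₂, T.biUnion_level, inter_eq_left.2 hBA]
  obtain ⟨s, hs, hpos⟩ : ∃ s ∈ level n, μ (B ∩ T.cell s) ≠ 0 := by
    by_contra! h
    rw [hcover] at hB
    exact hB.ne' ((measure_biUnion_null_iff (Finset.countable_toSet _)).2 h)
  refine ⟨B ∩ T.cell s, ⟨hBm.inter (measurableSet_generateFrom
    (mem_range_self s)), inter_subset_left.trans hBA⟩, inter_subset_left, pos_iff_ne_zero.2 hpos,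
    ?_⟩
  calc μ (B ∩ T.cell s) ≤ μ (T.cell s) := measure_mono inter_subset_right
    _ = μ A / 2 ^ n := by rw [T.measure_cell, mem_level.1 hs]
    _ < μ B := hn

lemma exists_subset_level_measureReal_symmDiff_lt [IsFiniteMeasure μ] {B : Set Ω}
    (hB : B ∈ T.sigmaAlgebra) {ε : ℝ} (hε : 0 < ε) :
    ∃ n, ∃ F ⊆ level n, μ.real (B ∆ ⋃ s ∈ F, T.cell s) < ε := by
  have hle := T.generateFrom_range_cell_le
  have hdense := @Measure.MeasureDense.of_generateFrom_isSetAlgebra_finite Ω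
    (generateFrom (range T.cell)) (μ.trim hle) _ (isFiniteMeasure_trim hle)
    isSetAlgebra_generateSetAlgebra generateFrom_generateSetAlgebra_eq.symm
  obtain ⟨t, ht, hBt⟩ := @Measure.MeasureDense.approx Ω (generateFrom (range T.cell))
    (μ.trim hle) _ hdense B hB.1
    (by rw [trim_measurableSet_eq hle hB.1]; exact measure_ne_top μ B) ε hε
  have htm : MeasurableSet[generateFrom (range T.cell)] t := by
    rw [← generateFrom_generateSetAlgebra_eq]
    exact measurableSet_generateFrom ht
  rw [trim_measurableSet_eq hle (hB.1.symmDiff htm)] at hBt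
  obtain ⟨n, F, hF, htA⟩ := T.exists_inter_eq_biUnion_of_mem_generateSetAlgebra ht
  refine ⟨n, F, hF, ENNReal.toReal_lt_of_lt_ofReal ((measure_mono ?_).trans_lt hBt)⟩
  rw [← htA]
  rintro x (⟨hxB, hxt⟩ | ⟨hxt, hxB⟩)
  · exact Or.inl ⟨hxB, fun h => hxt ⟨h, hB.2 hxB⟩⟩
  · exact Or.inr ⟨hxt.1, hxB⟩

section Lp

variable [IsFiniteMeasure μ] (p : ℝ≥0∞)

def indicator (s : List Bool) : Lp ℝ p μ :=
  indicatorConstLp p (T.measurableSet_cell s) (measure_ne_top μ _) 1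

def haar (s : List Bool) : Lp ℝ p μ :=
  T.indicator p (false :: s) - T.indicator p (true :: s)

lemma indicator_eq_add (s : List Bool) :
    T.indicator p s = T.indicator p (false :: s) + T.indicator p (true :: s) := by
  rw [indicator, indicator, indicator, ← indicatorConstLp_disjoint_union _ _ _ _
    (T.disjoint_cell_false_cell_true s)]
  simp only [T.cell_false_union_cell_true]

lemma sum_indicator_of_subset_level {n : ℕ} {F : Finset (List Bool)} (hF : F ⊆ level n) :
    ∑ s ∈ F, T.indicator p s = indicatorConstLp p
      (F.measurableSet_biUnion fun s _ => T.measurableSet_cell s) (measure_ne_top μ _) 1 :=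
  (indicatorConstLp_biUnion_finset p F T.measurableSet_cell
    ((T.pairwiseDisjoint_level n).subset hF) 1).symm

lemma sum_level_succ_smul_indicator (n : ℕ) (c : List Bool → ℝ) :
    ∑ s ∈ level (n + 1), c s • T.indicator p s =
      ∑ s ∈ level n, (((c (false :: s) + c (true :: s)) / 2) • T.indicator p s +
        ((c (false :: s) - c (true :: s)) / 2) • T.haar p s) := by
  rw [level, sum_children]
  refine Finset.sum_congr rfl fun s _ => ?_
  rw [haar, T.indicator_eq_add p s]
  match_scalars <;> ring

end Lp

section Estimates

variable [IsFiniteMeasure μ] {p : ℝ≥0∞} [Fact (1 ≤ p)] {X : Type*} [NormedAddCommGroup X]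
  [NormedSpace ℝ X] {U : Lp ℝ p μ →L[ℝ] X} {w : ℕ → ℝ}

lemma norm_sum_level_smul_map_haar_le (hU : ∀ s, ‖U (T.haar p s)‖ ≤ w s.length) (n : ℕ)
    {d : List Bool → ℝ} (hd : ∀ s, |d s| ≤ 1) :
    ‖∑ s ∈ level n, d s • U (T.haar p s)‖ ≤ 2 ^ n * w n := by
  calc ‖∑ s ∈ level n, d s • U (T.haar p s)‖
      ≤ ∑ s ∈ level n, ‖d s • U (T.haar p s)‖ := norm_sum_le _ _
    _ ≤ ∑ s ∈ level n, w n := Finset.sum_le_sum fun s hs => by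
        rw [norm_smul, Real.norm_eq_abs, ← mem_level.1 hs]
        exact (mul_le_mul (hd s) (hU s) (norm_nonneg _) zero_le_one).trans_eq (one_mul _)
    _ = 2 ^ n * w n := by rw [Finset.sum_const, card_level, nsmul_eq_mul, Nat.cast_pow,
        Nat.cast_ofNat]

/-- Averaging the coefficients of sibling cells peels off one level of Haar functions. -/
theorem norm_map_sum_level_smul_indicator_sub_le (hU : ∀ s, ‖U (T.haar p s)‖ ≤ w s.length)
    (n : ℕ) {c : List Bool → ℝ} (hc : ∀ s, |c s| ≤ 1) :
    ‖U (∑ s ∈ level n, c s • T.indicator p s) -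
        ((∑ s ∈ level n, c s) / 2 ^ n) • U (T.indicator p [])‖ ≤
      ∑ k ∈ Finset.range n, 2 ^ k * w k := by
  induction n generalizing c with
  | zero => simp [level]
  | succ n ih =>
    set c' : List Bool → ℝ := fun s => (c (false :: s) + c (true :: s)) / 2
    set d : List Bool → ℝ := fun s => (c (false :: s) - c (true :: s)) / 2
    have hc' : ∀ s, |c' s| ≤ 1 := fun s => by
      have := abs_add_le (c (false :: s)) (c (true :: s))
      simp only [c', abs_div, abs_two]
      linarith [hc (false :: s), hc (true :: s)]
    have hd : ∀ s, |d s| ≤ 1 := fun s => by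
      have := abs_sub (c (false :: s)) (c (true :: s))
      simp only [d, abs_div, abs_two]
      linarith [hc (false :: s), hc (true :: s)]
    have hmean :
        (∑ s ∈ level (n + 1), c s) / 2 ^ (n + 1) = (∑ s ∈ level n, c' s) / 2 ^ n := by
      rw [level, sum_children, ← Finset.sum_div, pow_succ', div_div]
    have hsplit : U (∑ s ∈ level (n + 1), c s • T.indicator p s) -
          ((∑ s ∈ level (n + 1), c s) / 2 ^ (n + 1)) • U (T.indicator p []) =
        (U (∑ s ∈ level n, c' s • T.indicator p s) -
          ((∑ s ∈ level n, c' s) / 2 ^ n) • U (T.indicator p [])) +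
        ∑ s ∈ level n, d s • U (T.haar p s) := by
      rw [T.sum_level_succ_smul_indicator, hmean, Finset.sum_add_distrib, map_add, map_sum,
        map_sum]
      simp only [map_smul]
      abel
    rw [hsplit, Finset.sum_range_succ]
    exact (norm_add_le _ _).trans
      (add_le_add (ih hc') (T.norm_sum_level_smul_map_haar_le hU n hd))

lemma norm_map_indicatorConstLp_biUnion_sub_le (hU : ∀ s, ‖U (T.haar p s)‖ ≤ w s.length)
    (hA : μ A ≠ 0) {n : ℕ} {F : Finset (List Bool)} (hF : F ⊆ level n) :
    ‖U (indicatorConstLp p (F.measurableSet_biUnion fun s _ => T.measurableSet_cell s)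
          (measure_ne_top μ _) (1 : ℝ)) -
        (μ.real (⋃ s ∈ F, T.cell s) / μ.real A) • U (T.indicator p [])‖ ≤
      ∑ k ∈ Finset.range n, 2 ^ k * w k := by
  classical
  have h := T.norm_map_sum_level_smul_indicator_sub_le hU n
    (c := fun s => if s ∈ F then 1 else 0) fun s => by split_ifs <;> simp
  have hsum : ∑ s ∈ level n, (if s ∈ F then (1 : ℝ) else 0) = F.card := by
    rw [Finset.sum_ite_mem, Finset.inter_eq_right.2 hF, Finset.sum_const, nsmul_one]
  have hsmul : ∑ s ∈ level n, (if s ∈ F then (1 : ℝ) else 0) • T.indicator p s =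
      ∑ s ∈ F, T.indicator p s := by
    simp_rw [ite_smul, one_smul, zero_smul]
    rw [Finset.sum_ite_mem, Finset.inter_eq_right.2 hF]
  have hratio : (F.card : ℝ) / 2 ^ n = μ.real (⋃ s ∈ F, T.cell s) / μ.real A := by
    rw [T.measureReal_biUnion_of_subset_level hF]
    field_simp [(measureReal_ne_zero_iff (measure_ne_top μ A)).2 hA]
  rwa [hsmul, hsum, hratio, T.sum_indicator_of_subset_level p hF] at h

/-- The estimate passes from finite unions of cells to their closure in `MeasuredSets μ`,
which contains the whole of `T.sigmaAlgebra`. -/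
theorem norm_map_indicatorConstLp_sub_le_of_mem_sigmaAlgebra (hp : p ≠ ∞)
    (hU : ∀ s, ‖U (T.haar p s)‖ ≤ w s.length) {C : ℝ}
    (hw : ∀ n, ∑ k ∈ Finset.range n, 2 ^ k * w k ≤ C) (hA : μ A ≠ 0) {B : Set Ω}
    (hB : B ∈ T.sigmaAlgebra) :
    ‖U (indicatorConstLp p (T.isSubSigmaAlgebraOn.measurable B hB) (measure_ne_top μ B)
          (1 : ℝ)) - (μ.real B / μ.real A) • U (T.indicator p [])‖ ≤ C := by
  let Φ : MeasuredSets μ → X := fun u =>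
    U (indicatorConstLp p u.2 (measure_ne_top μ u) (1 : ℝ)) -
      (μ.real u / μ.real A) • U (T.indicator p [])
  have hind : Continuous fun u : MeasuredSets μ =>
      indicatorConstLp p u.2 (measure_ne_top μ u) (1 : ℝ) :=
    continuous_indicatorConstLp_set hp fun u => by
      have h : Tendsto (fun v : MeasuredSets μ => edist v u) (𝓝 u) (𝓝 (edist u u)) :=
        tendsto_id.edist tendsto_const_nhds
      rwa [edist_self] at h
  have hΦ : Continuous Φ := (U.continuous.comp hind).sub
    ((MeasuredSets.lipschitzWith_measureReal.continuous.div_const _).smul continuous_const)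
  set cellUnions : Set (MeasuredSets μ) :=
    {u | ∃ n, ∃ F ⊆ level n, (u : Set Ω) = ⋃ s ∈ F, T.cell s}
  have hmem : (⟨B, T.isSubSigmaAlgebraOn.measurable B hB⟩ : MeasuredSets μ) ∈
      closure cellUnions := by
    refine (Metric.mem_closure_iff (α := MeasuredSets μ)).2 fun ε hε => ?_
    obtain ⟨n, F, hF, hBF⟩ := T.exists_subset_level_measureReal_symmDiff_lt hB hε
    exact ⟨⟨_, F.measurableSet_biUnion fun s _ => T.measurableSet_cell s⟩, ⟨n, F, hF, rfl⟩,
      hBF⟩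
  refine closure_minimal (s := cellUnions) ?_
    (isClosed_le (continuous_norm.comp hΦ) continuous_const) hmem
  rintro ⟨_, _⟩ ⟨n, F, hF, rfl⟩
  exact (T.norm_map_indicatorConstLp_biUnion_sub_le hU hA hF).trans (hw n)

theorem norm_map_le_of_isSignIn (hp : p ≠ ∞) (hU : ∀ s, ‖U (T.haar p s)‖ ≤ w s.length)
    {C : ℝ} (hw : ∀ n, ∑ k ∈ Finset.range n, 2 ^ k * w k ≤ C) (hA : μ A ≠ 0)
    {f : Lp ℝ p μ} {B : Set Ω} (hf : IsSignIn μ p f B T.sigmaAlgebra) :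
    ‖U f‖ ≤ 2 * C := by
  obtain ⟨B₁, hB₁, B₂, hB₂, h₁, h₂, -, -, hμ, rfl⟩ := hf
  have h₁C := T.norm_map_indicatorConstLp_sub_le_of_mem_sigmaAlgebra hp hU hw hA hB₁
  have h₂C := T.norm_map_indicatorConstLp_sub_le_of_mem_sigmaAlgebra hp hU hw hA hB₂
  have hμ' : μ.real B₁ = μ.real B₂ := by rw [measureReal_def, hμ, measureReal_def]
  set e := U (T.indicator p [])
  rw [map_sub]
  calc ‖U (indicatorConstLp p h₁ _ 1) - U (indicatorConstLp p h₂ _ 1)‖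
      = ‖(U (indicatorConstLp p h₁ _ 1) - (μ.real B₁ / μ.real A) • e) -
          (U (indicatorConstLp p h₂ _ 1) - (μ.real B₂ / μ.real A) • e)‖ := by
        rw [hμ', sub_sub_sub_cancel_right]
    _ ≤ 2 * C := (norm_sub_le _ _).trans (by linarith)

end Estimates

end DyadicTree

section PPNarrow

variable {μ : Measure Ω} [IsFiniteMeasure μ] {p : ℝ≥0∞} [Fact (1 ≤ p)]
  {X : Type*} [NormedAddCommGroup X] [NormedSpace ℝ X] {U : Lp ℝ p μ →L[ℝ] X}

lemma IsSignIn.isSignOn {f : Lp ℝ p μ} {B : Set Ω} {S : Set (Set Ω)}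
    (hf : IsSignIn μ p f B S) : IsSignOn μ p f B := by
  obtain ⟨B₁, -, B₂, -, h₁, h₂, hdisj, hunion, hμ, hf⟩ := hf
  exact ⟨B₁, B₂, h₁, h₂, hdisj, hunion, hμ, hf⟩

lemma PPNarrow.exists_halves (hU : PPNarrow μ p U) {B : Set Ω} (hB : MeasurableSet B)
    (hB0 : 0 < μ B) {δ : ℝ} (hδ : 0 < δ) :
    ∃ C : Bool → Set Ω, ∃ hC : ∀ b, MeasurableSet (C b),
      Disjoint (C false) (C true) ∧ C false ∪ C true = B ∧ (∀ b, μ (C b) = μ B / 2) ∧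
      ‖U (indicatorConstLp p (hC false) (measure_ne_top μ _) (1 : ℝ) -
        indicatorConstLp p (hC true) (measure_ne_top μ _) 1)‖ ≤ δ := by
  obtain ⟨f, ⟨B₁, B₂, h₁, h₂, hdisj, hunion, hμ, rfl⟩, hf⟩ := hU B hB hB0 δ hδ
  have hhalf : μ B₁ = μ B / 2 := by
    rw [ENNReal.eq_div_iff two_ne_zero ofNat_ne_top, two_mul, ← hunion,
      measure_union hdisj h₂]
    nth_rewrite 2 [hμ]
    rfl
  refine ⟨fun b => cond b B₂ B₁, fun b => by cases b <;> assumption, hdisj, hunion,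
    fun b => ?_, hf⟩
  cases b
  exacts [hhalf, hμ ▸ hhalf]

theorem PPNarrow.exists_dyadicTree (hU : PPNarrow μ p U) {A : Set Ω} (hA : MeasurableSet A)
    (hA0 : 0 < μ A) {w : ℕ → ℝ} (hw : ∀ k, 0 < w k) :
    ∃ T : DyadicTree μ A, ∀ s, ‖U (T.haar p s)‖ ≤ w s.length := by
  obtain ⟨T, hT⟩ := DyadicTree.exists_of_halving hA hA0
    (P := fun n C => ∀ hC : ∀ b, MeasurableSet (C b),
      ‖U (indicatorConstLp p (hC false) (measure_ne_top μ _) (1 : ℝ) -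
        indicatorConstLp p (hC true) (measure_ne_top μ _) 1)‖ ≤ w n)
    fun n B hB hB0 => by
      obtain ⟨C, hC, hdisj, hunion, hμ, hnorm⟩ := hU.exists_halves hB hB0 (hw n)
      exact ⟨C, hC, hdisj, hunion, hμ, fun _ => hnorm⟩
  exact ⟨T, fun s => hT s fun b => T.measurableSet_cell (b :: s)⟩

end PPNarrow

theorem ppNarrow_add_hppNarrow_general
    (μ : Measure Ω) [IsProbabilityMeasure μ]
    (p : ℝ≥0∞) [Fact (1 ≤ p)] (hp : p ≠ ∞)
    {X : Type*} [NormedAddCommGroup X] [NormedSpace ℝ X]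
    (U V : Lp ℝ p μ →L[ℝ] X) (hU : PPNarrow μ p U) (hV : HPPNarrow μ p V) :
    PPNarrow μ p (U + V) := by
  intro A hA hA0 ε hε
  obtain ⟨T, hT⟩ :=
    hU.exists_dyadicTree hA hA0 (w := fun k => ε / 8 / 4 ^ k) fun k => by positivity
  obtain ⟨f, hf, hVf⟩ := hV A hA hA0 T.sigmaAlgebra T.isSubSigmaAlgebraOn T.nonatomicOn A
    T.isSubSigmaAlgebraOn.top_mem hA0 (ε / 2) (by positivity)
  have hUf := T.norm_map_le_of_isSignIn hp hT (sum_two_pow_mul_div_four_pow_le (by positivity))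
    hA0.ne' hf
  refine ⟨f, hf.isSignOn, ?_⟩
  calc ‖(U + V) f‖ ≤ ‖U f‖ + ‖V f‖ := norm_add_le _ _
    _ ≤ ε := by linarith

/-- Proposition 2.5(a). If `U : L_p(μ) → X` is PP-narrow and
`V : L_p(μ) → X` is hereditarily PP-narrow, then `U + V` is PP-narrow. -/
theorem ppNarrow_add_hppNarrow
    (μ : Measure Ω) [IsProbabilityMeasure μ] [NullSingletonClass μ]
    (p : ℝ≥0∞) [Fact (1 ≤ p)] (hp : p ≠ ∞)
    {X : Type*} [NormedAddCommGroup X] [NormedSpace ℝ X] [CompleteSpace X]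
    (U V : Lp ℝ p μ →L[ℝ] X) (hU : PPNarrow μ p U) (hV : HPPNarrow μ p V) :
    PPNarrow μ p (U + V) :=
  ppNarrow_add_hppNarrow_general μ p hp U V hU hV
end
end

section
/- Let 1 ≤ p < ∞, X a Banach space, and U, V: L_p → X bounded linear operators. If U and V are both hereditarily PP-narrow, then U + V is hereditarily PP-narrow. -/
open MeasureTheory ENNReal Set Filter

noncomputable section

variable {Ω : Type*} [MeasurableSpace Ω]

/-!
Fix `B ∈ S` and `ε > 0`. Since `U` is hereditarily PP-narrow, `B` splits into two halves of
equal measure in `S` whose difference of indicators `U` almost kills; splitting every half again,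
with errors decaying like `4⁻ⁿ` at depth `n`, gives a dyadic tree of sets. On the σ-algebra `G`
the tree generates, `U χ_C` stays uniformly close to `(μ C / μ B) • U χ_B`: for a union of nodes
of one depth this follows by going down the tree, and it passes to all of `G` by density in
measure. Nodes of depth `n` have measure `2⁻ⁿ μ B`, so `μ` is nonatomic on `G`, and the
hereditary PP-narrowness of `V` on `G` gives a sign `χ_{C₁} - χ_{C₂}` with `C₁, C₂ ∈ G ⊆ S`
whose `V`-image is small; as `μ C₁ = μ C₂`, its `U`-image is small as well.
-/

open scoped symmDiff Topology

namespace IsSubSigmaAlgebraOn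

variable {A : Set Ω} {S : Set (Set Ω)}

abbrev toMeasurableSpace (hS : IsSubSigmaAlgebraOn A S) : MeasurableSpace Ω where
  MeasurableSet' D := D ∩ A ∈ S
  measurableSet_empty := by simpa using hS.diff_mem A hS.top_mem
  measurableSet_compl D hD := by
    rw [show Dᶜ ∩ A = A \ (D ∩ A) by ext; simp; tauto]
    exact hS.diff_mem _ hD
  measurableSet_iUnion f hf := by
    rw [iUnion_inter]
    exact hS.iUnion_mem _ hf

lemma mem_iff (hS : IsSubSigmaAlgebraOn A S) {C : Set Ω} :
    C ∈ S ↔ C ⊆ A ∧ MeasurableSet[hS.toMeasurableSpace] C := by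
  refine ⟨fun hC => ⟨hS.subset C hC, ?_⟩, fun ⟨hCA, hC⟩ => ?_⟩
  · show C ∩ A ∈ S
    rwa [inter_eq_left.2 (hS.subset C hC)]
  · have : C ∩ A ∈ S := hC
    rwa [inter_eq_left.2 hCA] at this

end IsSubSigmaAlgebraOn

lemma isSubSigmaAlgebraOn_generateFrom {R : Set (Set Ω)} (hR : ∀ s ∈ R, MeasurableSet s)
    {A : Set Ω} (hA : A ∈ R) :
    IsSubSigmaAlgebraOn A {C | C ⊆ A ∧ MeasurableSet[MeasurableSpace.generateFrom R] C} where
  measurable _ hC := MeasurableSpace.generateFrom_le hR _ hC.2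
  subset _ hC := hC.1
  top_mem := ⟨subset_rfl, MeasurableSpace.measurableSet_generateFrom hA⟩
  diff_mem _ hC := ⟨sdiff_subset, (MeasurableSpace.measurableSet_generateFrom hA).diff hC.2⟩
  iUnion_mem _ hg := ⟨iUnion_subset fun n => (hg n).1, MeasurableSet.iUnion fun n => (hg n).2⟩

section Deviation

variable {μ : Measure Ω} [IsFiniteMeasure μ] {p : ℝ≥0∞}

variable (μ p) in
/-- `χ_C` in `L_p(μ)`, with the junk value `0` when `C` is not measurable. -/
def indicatorOneLp (C : Set Ω) : Lp ℝ p μ :=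
  open Classical in
  if h : MeasurableSet C then indicatorConstLp p h (measure_ne_top μ C) 1 else 0

lemma indicatorOneLp_of_measurableSet {C : Set Ω} (hC : MeasurableSet C) :
    indicatorOneLp μ p C = indicatorConstLp p hC (measure_ne_top μ C) 1 :=
  dif_pos hC

lemma indicatorOneLp_union {C D : Set Ω} (hC : MeasurableSet C) (hD : MeasurableSet D)
    (hCD : Disjoint C D) :
    indicatorOneLp μ p (C ∪ D) = indicatorOneLp μ p C + indicatorOneLp μ p D := by
  simp only [indicatorOneLp_of_measurableSet, hC, hD, hC.union hD]
  exact indicatorConstLp_disjoint_union hC hD _ _ hCD 1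

variable [Fact (1 ≤ p)] {X : Type*} [NormedAddCommGroup X] [NormedSpace ℝ X]

def deviation (U : Lp ℝ p μ →L[ℝ] X) (B C : Set Ω) : X :=
  U (indicatorOneLp μ p C) - (μ.real C / μ.real B) • U (indicatorOneLp μ p B)

variable (U : Lp ℝ p μ →L[ℝ] X) {B C D : Set Ω}

lemma deviation_self (hB : μ.real B ≠ 0) : deviation U B B = 0 := by
  simp [deviation, div_self hB]

lemma deviation_empty : deviation U B ∅ = 0 := by
  simp [deviation, indicatorOneLp_of_measurableSet MeasurableSet.empty, indicatorConstLp_empty]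

lemma deviation_union (hC : MeasurableSet C) (hD : MeasurableSet D) (hCD : Disjoint C D) :
    deviation U B (C ∪ D) = deviation U B C + deviation U B D := by
  simp only [deviation, indicatorOneLp_union hC hD hCD, measureReal_union (μ := μ) hCD hD, map_add,
    add_div, add_smul]
  abel

lemma deviation_sub_deviation (hCD : μ C = μ D) :
    deviation U B C - deviation U B D =
      U (indicatorOneLp μ p C - indicatorOneLp μ p D) := by
  simp only [deviation, map_sub, Measure.real, hCD]
  abel

lemma norm_deviation_le_of_halves (hC : MeasurableSet C) (hD : MeasurableSet D)
    (hCD : Disjoint C D) (hμ : μ C = μ D) :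
    ‖deviation U B C‖ ≤ 2⁻¹ * ‖deviation U B (C ∪ D)‖ +
      2⁻¹ * ‖U (indicatorOneLp μ p C - indicatorOneLp μ p D)‖ := by
  have h : deviation U B C = (2⁻¹ : ℝ) • (deviation U B (C ∪ D) +
      U (indicatorOneLp μ p C - indicatorOneLp μ p D)) := by
    rw [deviation_union U hC hD hCD, ← deviation_sub_deviation U hμ]
    module
  rw [h, norm_smul, Real.norm_of_nonneg (by norm_num), ← mul_add]
  gcongr
  exact norm_add_le _ _

lemma norm_deviation_union_le {c : ℝ} (hC : MeasurableSet C) (hD : MeasurableSet D)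
    (hCD : Disjoint C D) (hC' : ‖deviation U B C‖ ≤ c * μ.real C)
    (hD' : ‖deviation U B D‖ ≤ c * μ.real D) :
    ‖deviation U B (C ∪ D)‖ ≤ c * μ.real (C ∪ D) := by
  rw [deviation_union U hC hD hCD, measureReal_union (μ := μ) hCD hD, mul_add]
  exact (norm_add_le _ _).trans (add_le_add hC' hD')

lemma tendsto_deviation (hp : p ≠ ∞) {ι : Type*} {l : Filter ι} {s : ι → Set Ω}
    (hs : ∀ i, MeasurableSet (s i)) (hC : MeasurableSet C)
    (hsC : Tendsto (fun i => μ (s i ∆ C)) l (𝓝 0)) :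
    Tendsto (fun i => deviation U B (s i)) l (𝓝 (deviation U B C)) := by
  have hind : Tendsto (fun i => indicatorOneLp μ p (s i)) l (𝓝 (indicatorOneLp μ p C)) := by
    simp only [indicatorOneLp_of_measurableSet, hs, hC]
    exact tendsto_indicatorConstLp_set hp hsC
  have hreal : Tendsto (fun i => μ.real (s i)) l (𝓝 (μ.real C)) := by
    rw [tendsto_iff_norm_sub_tendsto_zero]
    refine squeeze_zero_norm (fun i => ?_)
      ((ENNReal.tendsto_toReal ENNReal.zero_ne_top).comp hsC)
    rw [norm_norm]
    exact abs_measureReal_sub_le_measureReal_symmDiff (hs i).nullMeasurableSet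
      hC.nullMeasurableSet
  exact ((U.continuous.tendsto _).comp hind).sub
    ((hreal.div_const _).smul tendsto_const_nhds)

lemma norm_deviation_le_of_approx (hp : p ≠ ∞) {δ : ℝ} (hC : MeasurableSet C)
    (happrox : ∀ η : ℝ≥0∞, 0 < η →
      ∃ s, MeasurableSet s ∧ μ (s ∆ C) < η ∧ ‖deviation U B s‖ ≤ δ) :
    ‖deviation U B C‖ ≤ δ := by
  choose s hs hsC hsδ using fun k : ℕ =>
    happrox (k : ℝ≥0∞)⁻¹ (ENNReal.inv_pos.2 (ENNReal.natCast_ne_top k))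
  have hlim : Tendsto (fun k => μ (s k ∆ C)) atTop (𝓝 0) :=
    tendsto_of_tendsto_of_tendsto_of_le_of_le tendsto_const_nhds
      ENNReal.tendsto_inv_nat_nhds_zero (fun _ => zero_le) (fun k => (hsC k).le)
  exact le_of_tendsto' (tendsto_deviation U hp hs hC hlim).norm hsδ

end Deviation

structure IsHalvingTree (μ : Measure Ω) (t : List Bool → Set Ω) : Prop where
  measurableSet (w : List Bool) : MeasurableSet (t w)
  disjoint (w : List Bool) : Disjoint (t (false :: w)) (t (true :: w))
  union_eq (w : List Bool) : t (false :: w) ∪ t (true :: w) = t w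
  measure_eq (w : List Bool) : μ (t (false :: w)) = μ (t (true :: w))

lemma exists_isHalvingTree_of_split {μ : Measure Ω} {P : Set Ω → Prop}
    {Q : ℕ → Set Ω → Set Ω → Prop}
    (hP : ∀ N, P N → MeasurableSet N)
    (split : ∀ n N, P N → ∃ N₀ N₁, P N₀ ∧ P N₁ ∧ Disjoint N₀ N₁ ∧ N₀ ∪ N₁ = N ∧
      μ N₀ = μ N₁ ∧ Q n N₀ N₁)
    {B : Set Ω} (hB : P B) :
    ∃ t, IsHalvingTree μ t ∧ t [] = B ∧ (∀ w, P (t w)) ∧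
      ∀ w, Q w.length (t (false :: w)) (t (true :: w)) := by
  choose! g₀ g₁ hg using split
  let t : List Bool → Set Ω := fun w =>
    w.rec B fun b w N => bif b then g₁ w.length N else g₀ w.length N
  have htP : ∀ w, P (t w) := by
    intro w
    induction w with
    | nil => exact hB
    | cons b w ih =>
      obtain ⟨h₀, h₁, -⟩ := hg _ _ ih
      cases b
      exacts [h₀, h₁]
  exact ⟨t, ⟨fun w => hP _ (htP w), fun w => (hg _ _ (htP w)).2.2.1,
    fun w => (hg _ _ (htP w)).2.2.2.1, fun w => (hg _ _ (htP w)).2.2.2.2.1⟩, rfl, htP,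
    fun w => (hg _ _ (htP w)).2.2.2.2.2⟩

section LevelUnion

variable {α : Type*}

def IsLevelUnion (t : List Bool → Set α) (n : ℕ) (s : Set α) : Prop :=
  ∃ F : Finset (List Bool), (∀ w ∈ F, w.length = n) ∧ s = ⋃ w ∈ F, t w

def levelUnions (t : List Bool → Set α) : Set (Set α) :=
  {s | ∃ n, IsLevelUnion t n s}

/-- Generated by the ring `levelUnions t` rather than by the nodes themselves (the same
σ-algebra), so that the density lemma for rings of sets applies to it. -/
def treeSigmaAlgebra (t : List Bool → Set α) : Set (Set α) :=
  {C | C ⊆ t [] ∧ MeasurableSet[MeasurableSpace.generateFrom (levelUnions t)] C}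

lemma isLevelUnion_node (t : List Bool → Set α) (w : List Bool) :
    IsLevelUnion t w.length (t w) :=
  ⟨{w}, by simp, by simp⟩

lemma IsLevelUnion.union {t : List Bool → Set α} {n : ℕ} {s s' : Set α}
    (hs : IsLevelUnion t n s) (hs' : IsLevelUnion t n s') : IsLevelUnion t n (s ∪ s') := by
  obtain ⟨F, hF, rfl⟩ := hs
  obtain ⟨F', hF', rfl⟩ := hs'
  exact ⟨F ∪ F', fun w hw => (Finset.mem_union.1 hw).elim (hF w) (hF' w),
    (Finset.set_biUnion_union F F' t).symm⟩

end LevelUnion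

namespace IsHalvingTree

variable {μ : Measure Ω} {t : List Bool → Set Ω}

lemma child_subset (ht : IsHalvingTree μ t) (b : Bool) (w : List Bool) : t (b :: w) ⊆ t w := by
  rw [← ht.union_eq w]
  cases b
  exacts [subset_union_left, subset_union_right]

lemma subset_root (ht : IsHalvingTree μ t) : ∀ w, t w ⊆ t []
  | [] => subset_rfl
  | b :: w => (ht.child_subset b w).trans (ht.subset_root w)

lemma disjoint_of_length_eq (ht : IsHalvingTree μ t) :
    ∀ {w v : List Bool}, w.length = v.length → w ≠ v → Disjoint (t w) (t v)
  | [], [], _, hne => absurd rfl hne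
  | b :: w, c :: v, hl, hne => by
    by_cases hwv : w = v
    · subst hwv
      obtain rfl : c = !b := by cases b <;> cases c <;> simp_all
      cases b
      exacts [ht.disjoint w, (ht.disjoint w).symm]
    · exact (ht.disjoint_of_length_eq (Nat.succ.inj hl) hwv).mono
        (ht.child_subset b w) (ht.child_subset c v)

lemma measureReal_child [IsFiniteMeasure μ] (ht : IsHalvingTree μ t) (b : Bool)
    (w : List Bool) : μ.real (t (b :: w)) = 2⁻¹ * μ.real (t w) := by
  have hsum := measureReal_union (μ := μ) (ht.disjoint w) (ht.measurableSet _)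
  rw [ht.union_eq w, Measure.real, Measure.real, ht.measure_eq w] at hsum
  cases b <;> simp only [Measure.real, ht.measure_eq w, hsum] <;> ring

lemma measureReal_eq [IsFiniteMeasure μ] (ht : IsHalvingTree μ t) :
    ∀ w, μ.real (t w) = 2⁻¹ ^ w.length * μ.real (t [])
  | [] => by simp
  | b :: w => by
    rw [ht.measureReal_child, ht.measureReal_eq w, List.length_cons, pow_succ]
    ring

lemma isLevelUnion_succ (ht : IsHalvingTree μ t) {n : ℕ} {s : Set Ω}
    (hs : IsLevelUnion t n s) : IsLevelUnion t (n + 1) s := by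
  obtain ⟨F, hF, rfl⟩ := hs
  refine ⟨F.image (List.cons false) ∪ F.image (List.cons true), ?_, ?_⟩
  · simp only [Finset.mem_union, Finset.mem_image]
    rintro _ (⟨w, hw, rfl⟩ | ⟨w, hw, rfl⟩) <;> simp [hF w hw]
  · simp only [Finset.set_biUnion_union, Finset.set_biUnion_finset_image,
      ← iUnion_union_distrib, ht.union_eq]

lemma isLevelUnion_mono (ht : IsHalvingTree μ t) {n m : ℕ} (hnm : n ≤ m) {s : Set Ω}
    (hs : IsLevelUnion t n s) : IsLevelUnion t m s := by
  induction m, hnm using Nat.le_induction with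
  | base => exact hs
  | succ m _ ih => exact ht.isLevelUnion_succ ih

lemma isLevelUnion_sdiff (ht : IsHalvingTree μ t) {n : ℕ} {s s' : Set Ω}
    (hs : IsLevelUnion t n s) (hs' : IsLevelUnion t n s') : IsLevelUnion t n (s \ s') := by
  classical
  obtain ⟨F, hF, rfl⟩ := hs
  obtain ⟨F', hF', rfl⟩ := hs'
  refine ⟨F \ F', fun w hw => hF w (Finset.mem_sdiff.1 hw).1, ?_⟩
  ext x
  simp only [Set.mem_sdiff, mem_iUnion, Finset.mem_sdiff, exists_prop, not_exists, not_and]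
  constructor
  · rintro ⟨⟨w, hw, hx⟩, hx'⟩
    exact ⟨w, ⟨hw, fun hw' => hx' w hw' hx⟩, hx⟩
  · rintro ⟨w, ⟨hw, hw'⟩, hx⟩
    refine ⟨⟨w, hw, hx⟩, fun v hv hxv => ?_⟩
    have hlen : w.length = v.length := (hF w hw).trans (hF' v hv).symm
    exact Set.disjoint_left.1 (ht.disjoint_of_length_eq hlen (by rintro rfl; exact hw' hv))
      hx hxv

lemma isSetRing_levelUnions (ht : IsHalvingTree μ t) : IsSetRing (levelUnions t) where
  empty_mem := ⟨0, ∅, by simp, by simp⟩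
  union_mem := fun _ _ ⟨n, hs⟩ ⟨m, hs'⟩ =>
    ⟨max n m, (ht.isLevelUnion_mono (le_max_left n m) hs).union
      (ht.isLevelUnion_mono (le_max_right n m) hs')⟩
  sdiff_mem := fun _ _ ⟨n, hs⟩ ⟨m, hs'⟩ =>
    ⟨max n m, ht.isLevelUnion_sdiff (ht.isLevelUnion_mono (le_max_left n m) hs)
      (ht.isLevelUnion_mono (le_max_right n m) hs')⟩

lemma subset_root_of_isLevelUnion (ht : IsHalvingTree μ t) {n : ℕ} {s : Set Ω}
    (hs : IsLevelUnion t n s) : s ⊆ t [] := by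
  obtain ⟨F, -, rfl⟩ := hs
  exact iUnion₂_subset fun w _ => ht.subset_root w

lemma measurableSet_of_mem_levelUnions (ht : IsHalvingTree μ t) {s : Set Ω}
    (hs : s ∈ levelUnions t) : MeasurableSet s := by
  obtain ⟨n, F, -, rfl⟩ := hs
  exact F.measurableSet_biUnion fun w _ => ht.measurableSet w

lemma isSubSigmaAlgebraOn_treeSigmaAlgebra (ht : IsHalvingTree μ t) :
    IsSubSigmaAlgebraOn (t []) (treeSigmaAlgebra t) :=
  isSubSigmaAlgebraOn_generateFrom (fun _ => ht.measurableSet_of_mem_levelUnions)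
    ⟨0, isLevelUnion_node t []⟩

lemma nonatomicOn_treeSigmaAlgebra [IsFiniteMeasure μ] (ht : IsHalvingTree μ t)
    (hroot : 0 < μ (t [])) : NonatomicOn μ (treeSigmaAlgebra t) := by
  intro C hC hμC
  have hroot' : 0 < μ.real (t []) := ENNReal.toReal_pos hroot.ne' (measure_ne_top μ _)
  have hC' : 0 < μ.real C := ENNReal.toReal_pos hμC.ne' (measure_ne_top μ _)
  obtain ⟨n, hn⟩ := exists_pow_lt_of_lt_one (div_pos hC' hroot') (by norm_num : (2⁻¹ : ℝ) < 1)
  obtain ⟨F, hF, hFroot⟩ := ht.isLevelUnion_mono n.zero_le (isLevelUnion_node t [])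
  have hcover : C = ⋃ w ∈ F, C ∩ t w := by
    rw [← inter_iUnion₂, ← hFroot, inter_eq_left.2 hC.1]
  obtain ⟨w, hw, hpos⟩ : ∃ w ∈ F, 0 < μ (C ∩ t w) := by
    by_contra! h
    refine hμC.ne' ?_
    rw [hcover]
    exact (measure_biUnion_null_iff F.countable_toSet).2 fun w hw => nonpos_iff_eq_zero.1 (h w hw)
  refine ⟨C ∩ t w, ⟨inter_subset_left.trans hC.1,
    hC.2.inter (MeasurableSpace.measurableSet_generateFrom ⟨_, isLevelUnion_node t w⟩)⟩,
    inter_subset_left, hpos, ?_⟩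
  rw [← ENNReal.toReal_lt_toReal (measure_ne_top μ _) (measure_ne_top μ _)]
  calc μ.real (C ∩ t w) ≤ μ.real (t w) := measureReal_mono inter_subset_right
    _ = 2⁻¹ ^ n * μ.real (t []) := by rw [ht.measureReal_eq, hF w hw]
    _ < μ.real C := (lt_div_iff₀ hroot').1 hn

lemma exists_mem_levelUnions_measure_symmDiff_lt [IsFiniteMeasure μ] (ht : IsHalvingTree μ t)
    {C : Set Ω} (hC : C ∈ treeSigmaAlgebra t) {η : ℝ≥0∞} (hη : 0 < η) :
    ∃ s ∈ levelUnions t, μ (s ∆ C) < η := by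
  have hle := MeasurableSpace.generateFrom_le fun _ => ht.measurableSet_of_mem_levelUnions
  have hroot : t [] ∈ levelUnions t := ⟨0, isLevelUnion_node t []⟩
  -- The density lemma needs the ring to cover the space up to a null set: restrict to the root.
  let ν := (μ.restrict (t [])).trim hle
  have hcover : ν (⋃₀ {t []})ᶜ = 0 := by
    rw [sUnion_singleton, trim_measurableSet_eq hle
      (MeasurableSpace.measurableSet_generateFrom hroot).compl,
      Measure.restrict_apply (ht.measurableSet []).compl, compl_inter_self, measure_empty]
  obtain ⟨s, hs, hsC⟩ := @exists_measure_symmDiff_lt_of_generateFrom_isSetRing Ω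
    (MeasurableSpace.generateFrom (levelUnions t)) ν _ _ ht.isSetRing_levelUnions
    ⟨{t []}, countable_singleton _, singleton_subset_iff.2 hroot, hcover⟩
    rfl _ hC.2 _ hη
  refine ⟨s, hs, ?_⟩
  have hsub : s ∆ C ⊆ t [] :=
    symmDiff_subset_union.trans (union_subset (ht.subset_root_of_isLevelUnion hs.choose_spec) hC.1)
  rwa [trim_measurableSet_eq hle ((MeasurableSpace.measurableSet_generateFrom hs).symmDiff hC.2),
    Measure.restrict_eq_self μ hsub] at hsC

variable [IsFiniteMeasure μ] {p : ℝ≥0∞} [Fact (1 ≤ p)] {X : Type*} [NormedAddCommGroup X]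
  [NormedSpace ℝ X] {U : Lp ℝ p μ →L[ℝ] X} {δ : ℝ}

/-- The slack `4⁻¹ ^ n` absorbs the splitting error `δ * 4⁻¹ ^ n / 2` made one level below. -/
lemma norm_deviation_node_le (ht : IsHalvingTree μ t) (hroot : 0 < μ (t []))
    (hsplit : ∀ w, ‖U (indicatorOneLp μ p (t (false :: w)) - indicatorOneLp μ p (t (true :: w)))‖
      ≤ δ * 4⁻¹ ^ w.length / 2) :
    ∀ w, ‖deviation U (t []) (t w)‖ ≤ δ * (2⁻¹ ^ w.length - 4⁻¹ ^ w.length)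
  | [] => by simp [deviation_self U (ENNReal.toReal_pos hroot.ne' (measure_ne_top μ _)).ne']
  | b :: w => by
    have hhalf : ‖deviation U (t []) (t (b :: w))‖ ≤ 2⁻¹ * ‖deviation U (t []) (t w)‖ +
        2⁻¹ * ‖U (indicatorOneLp μ p (t (false :: w)) - indicatorOneLp μ p (t (true :: w)))‖ := by
      cases b
      · simpa only [ht.union_eq] using norm_deviation_le_of_halves U (ht.measurableSet _)
          (ht.measurableSet _) (ht.disjoint w) (ht.measure_eq w)
      · simpa only [union_comm, ht.union_eq, map_sub, norm_sub_rev] using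
          norm_deviation_le_of_halves U (ht.measurableSet _) (ht.measurableSet _)
          (ht.disjoint w).symm (ht.measure_eq w).symm
    calc ‖deviation U (t []) (t (b :: w))‖
        ≤ 2⁻¹ * (δ * (2⁻¹ ^ w.length - 4⁻¹ ^ w.length)) + 2⁻¹ * (δ * 4⁻¹ ^ w.length / 2) := by
          grw [hhalf, ht.norm_deviation_node_le hroot hsplit w, hsplit w]
      _ = δ * (2⁻¹ ^ (b :: w).length - 4⁻¹ ^ (b :: w).length) := by
          rw [List.length_cons, pow_succ, pow_succ]
          ring

lemma norm_deviation_le_mul_of_isLevelUnion (ht : IsHalvingTree μ t) (hroot : 0 < μ (t []))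
    (hδ : 0 ≤ δ)
    (hsplit : ∀ w, ‖U (indicatorOneLp μ p (t (false :: w)) - indicatorOneLp μ p (t (true :: w)))‖
      ≤ δ * 4⁻¹ ^ w.length / 2)
    {n : ℕ} {s : Set Ω} (hs : IsLevelUnion t n s) :
    ‖deviation U (t []) s‖ ≤ δ / μ.real (t []) * μ.real s := by
  have hnode : ∀ w, ‖deviation U (t []) (t w)‖ ≤ δ / μ.real (t []) * μ.real (t w) := by
    intro w
    calc ‖deviation U (t []) (t w)‖ ≤ δ * (2⁻¹ ^ w.length - 4⁻¹ ^ w.length) :=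
          ht.norm_deviation_node_le hroot hsplit w
      _ ≤ δ * 2⁻¹ ^ w.length := by
          gcongr
          exact sub_le_self _ (by positivity)
      _ = δ / μ.real (t []) * μ.real (t w) := by
          have hroot' : μ.real (t []) ≠ 0 := (ENNReal.toReal_pos hroot.ne' (measure_ne_top μ _)).ne'
          rw [ht.measureReal_eq w]
          field_simp
  obtain ⟨F, hF, rfl⟩ := hs
  induction F using Finset.induction_on with
  | empty => simp [deviation_empty]
  | insert a F ha ih =>
    have hdisj : Disjoint (t a) (⋃ w ∈ F, t w) := by
      refine Set.disjoint_iUnion₂_right.2 fun w hw => ht.disjoint_of_length_eq ?_ ?_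
      · rw [hF a (F.mem_insert_self a), hF w (F.mem_insert_of_mem hw)]
      · rintro rfl
        exact ha hw
    rw [Finset.set_biUnion_insert]
    exact norm_deviation_union_le U (ht.measurableSet a)
      (F.measurableSet_biUnion fun w _ => ht.measurableSet w) hdisj (hnode a)
      (ih fun w hw => hF w (F.mem_insert_of_mem hw))

lemma norm_deviation_le (ht : IsHalvingTree μ t) (hp : p ≠ ∞) (hroot : 0 < μ (t []))
    (hδ : 0 ≤ δ)
    (hsplit : ∀ w, ‖U (indicatorOneLp μ p (t (false :: w)) - indicatorOneLp μ p (t (true :: w)))‖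
      ≤ δ * 4⁻¹ ^ w.length / 2)
    {C : Set Ω} (hC : C ∈ treeSigmaAlgebra t) : ‖deviation U (t []) C‖ ≤ δ := by
  refine norm_deviation_le_of_approx U hp
    (ht.isSubSigmaAlgebraOn_treeSigmaAlgebra.measurable C hC) fun η hη => ?_
  obtain ⟨s, ⟨n, hs⟩, hsC⟩ := ht.exists_mem_levelUnions_measure_symmDiff_lt hC hη
  refine ⟨s, ht.measurableSet_of_mem_levelUnions ⟨n, hs⟩, hsC, ?_⟩
  calc ‖deviation U (t []) s‖ ≤ δ / μ.real (t []) * μ.real s :=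
        ht.norm_deviation_le_mul_of_isLevelUnion hroot hδ hsplit hs
    _ ≤ δ / μ.real (t []) * μ.real (t []) := by
        gcongr
        · finiteness
        · exact ht.subset_root_of_isLevelUnion hs
    _ = δ := div_mul_cancel₀ δ (ENNReal.toReal_pos hroot.ne' (measure_ne_top μ _)).ne'

end IsHalvingTree

lemma IsSubSigmaAlgebraOn.treeSigmaAlgebra_subset {A : Set Ω} {S : Set (Set Ω)}
    {t : List Bool → Set Ω} (hS : IsSubSigmaAlgebraOn A S) (htS : ∀ w, t w ∈ S) :
    treeSigmaAlgebra t ⊆ S := by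
  refine fun C hC => hS.mem_iff.2 ⟨hC.1.trans (hS.subset _ (htS [])), ?_⟩
  refine MeasurableSpace.generateFrom_le ?_ _ hC.2
  rintro _ ⟨n, F, -, rfl⟩
  exact @Finset.measurableSet_biUnion _ _ hS.toMeasurableSpace _ _ fun w _ =>
    (hS.mem_iff.1 (htS w)).2

lemma HPPNarrow.exists_isHalvingTree {μ : Measure Ω} [IsFiniteMeasure μ] {p : ℝ≥0∞}
    [Fact (1 ≤ p)] {X : Type*} [NormedAddCommGroup X] [NormedSpace ℝ X]
    {U : Lp ℝ p μ →L[ℝ] X} (hU : HPPNarrow μ p U) {A : Set Ω} (hA : MeasurableSet A)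
    (hμA : 0 < μ A) {S : Set (Set Ω)} (hS : IsSubSigmaAlgebraOn A S) (hSna : NonatomicOn μ S)
    {B : Set Ω} (hB : B ∈ S) (hμB : 0 < μ B) {δ : ℕ → ℝ} (hδ : ∀ n, 0 < δ n) :
    ∃ t, IsHalvingTree μ t ∧ t [] = B ∧ (∀ w, t w ∈ S) ∧
      ∀ w, ‖U (indicatorOneLp μ p (t (false :: w)) - indicatorOneLp μ p (t (true :: w)))‖
        ≤ δ w.length := by
  have split : ∀ (n : ℕ) (N : Set Ω), N ∈ S ∧ 0 < μ N → ∃ N₀ N₁,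
      (N₀ ∈ S ∧ 0 < μ N₀) ∧ (N₁ ∈ S ∧ 0 < μ N₁) ∧ Disjoint N₀ N₁ ∧ N₀ ∪ N₁ = N ∧
      μ N₀ = μ N₁ ∧ ‖U (indicatorOneLp μ p N₀ - indicatorOneLp μ p N₁)‖ ≤ δ n := by
    rintro n N ⟨hN, hμN⟩
    obtain ⟨_, ⟨N₀, hN₀, N₁, hN₁, h₀, h₁, hdisj, rfl, hμ, rfl⟩, hsmall⟩ :=
      hU A hA hμA S hS hSna N hN hμN (δ n) (hδ n)
    have hμN₀ : 0 < μ N₀ := by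
      by_contra! h
      have := measure_union_le (μ := μ) N₀ N₁
      rw [← hμ, nonpos_iff_eq_zero.1 h, add_zero] at this
      exact hμN.not_ge this
    refine ⟨N₀, N₁, ⟨hN₀, hμN₀⟩, ⟨hN₁, hμ ▸ hμN₀⟩, hdisj, rfl, hμ, ?_⟩
    rwa [indicatorOneLp_of_measurableSet h₀, indicatorOneLp_of_measurableSet h₁]
  obtain ⟨t, ht, rfl, htS, hsplit⟩ :=
    exists_isHalvingTree_of_split (fun N hN => hS.measurable N hN.1) split ⟨hB, hμB⟩
  exact ⟨t, ht, rfl, fun w => (htS w).1, hsplit⟩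

theorem hppNarrow_add_hppNarrow_general
    (μ : Measure Ω) [IsProbabilityMeasure μ]
    (p : ℝ≥0∞) [Fact (1 ≤ p)] (hp : p ≠ ∞)
    {X : Type*} [NormedAddCommGroup X] [NormedSpace ℝ X]
    (U V : Lp ℝ p μ →L[ℝ] X) (hU : HPPNarrow μ p U) (hV : HPPNarrow μ p V) :
    HPPNarrow μ p (U + V) := by
  intro A hA hμA S hS hSna B hB hμB ε hε
  obtain ⟨t, ht, rfl, htS, hsplit⟩ := hU.exists_isHalvingTree hA hμA hS hSna hB hμB
    (δ := fun n => ε / 4 * 4⁻¹ ^ n / 2) fun n => by positivity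
  have hG := ht.isSubSigmaAlgebraOn_treeSigmaAlgebra
  obtain ⟨f, ⟨C₁, hC₁, C₂, hC₂, h₁, h₂, hdisj, hunion, hμC, rfl⟩, hVf⟩ :=
    hV (t []) (ht.measurableSet []) hμB _ hG (ht.nonatomicOn_treeSigmaAlgebra hμB) _ hG.top_mem
      hμB (ε / 2) (by positivity)
  have hUf : ‖U (indicatorOneLp μ p C₁ - indicatorOneLp μ p C₂)‖ ≤ ε / 2 := by
    rw [← deviation_sub_deviation U hμC]
    calc _ ≤ ‖deviation U (t []) C₁‖ + ‖deviation U (t []) C₂‖ := norm_sub_le _ _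
      _ ≤ ε / 4 + ε / 4 := add_le_add (ht.norm_deviation_le hp hμB (by positivity) hsplit hC₁)
          (ht.norm_deviation_le hp hμB (by positivity) hsplit hC₂)
      _ = ε / 2 := by ring
  rw [indicatorOneLp_of_measurableSet h₁, indicatorOneLp_of_measurableSet h₂] at hUf
  refine ⟨_, ⟨C₁, hS.treeSigmaAlgebra_subset htS hC₁, C₂, hS.treeSigmaAlgebra_subset htS hC₂,
    h₁, h₂, hdisj, hunion, hμC, rfl⟩, ?_⟩
  calc ‖(U + V) _‖ ≤ ‖U _‖ + ‖V _‖ := norm_add_le _ _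
    _ ≤ ε / 2 + ε / 2 := add_le_add hUf hVf
    _ = ε := add_halves ε

/-- Proposition 2.5(b). If `U, V : L_p(μ) → X` are both hereditarily
PP-narrow, then `U + V` is hereditarily PP-narrow. -/
theorem hppNarrow_add_hppNarrow
    (μ : Measure Ω) [IsProbabilityMeasure μ] [NullSingletonClass μ]
    (p : ℝ≥0∞) [Fact (1 ≤ p)] (hp : p ≠ ∞)
    {X : Type*} [NormedAddCommGroup X] [NormedSpace ℝ X] [CompleteSpace X]
    (U V : Lp ℝ p μ →L[ℝ] X) (hU : HPPNarrow μ p U) (hV : HPPNarrow μ p V) :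
    HPPNarrow μ p (U + V) :=
  hppNarrow_add_hppNarrow_general μ p hp U V hU hV
end
end

section
/- Let (Ω,Σ,μ) be a nonatomic probability space, X a Banach space, {h_α : α ∈ 𝒜_∞} a Haar-like system on a set A ∈ Σ⁺ in L₁ = L₁(Ω,Σ,μ), and U: L₁ → X a bounded linear operator which maps {h_α} into an unconditional basic sequence with unconditional constant β, i.e., for every finitely supported family of scalars (a_α) and every choice of signs θ_α ∈ {−1,1}, ‖∑_α θ_α a_α Uh_α‖ ≤ β ‖∑_α a_α Uh_α‖. Then for every finitely supported family of scalars (a_α), ‖U(∑_α a_α h_α)‖ ≤ 2 β² ‖U‖ μ(A) · sup_α |a_α|. -/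
open MeasureTheory ENNReal Set Filter

noncomputable section

variable {Ω : Type*} [MeasurableSpace Ω]

/-! For signs `σ` and weights `0 ≤ b_α ≤ 1`, the Riesz product `∏_{k < N} (1 + σ_k ∑_{|α| = k} b_α h_α)`
is a nonnegative function of integral `μ(A)`, hence lies within `2 μ(A)` of `χ_A` in `L₁`. Its value
on `A_α` is the `rieszWeight` `q_σ(α)`, and telescoping over the depth shows that it differs from `χ_A`
by `∑_α σ_{|α|} b_α q_σ(α) h_α`. Unconditionality removes the signs `σ_{|α|}`, and averaging over all
`σ` replaces `q_σ(α)` by its mean `1`, so `‖∑ b_α U h_α‖ ≤ 2 β ‖U‖ μ(A)`. Writing `a_α = ± |a_α|`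
costs one more factor `β`. -/

def boolSign (c : Bool) : ℝ := if c then 1 else -1

@[simp] lemma boolSign_true : boolSign true = 1 := rfl

@[simp] lemma boolSign_false : boolSign false = -1 := rfl

lemma abs_boolSign (c : Bool) : |boolSign c| = 1 := by cases c <;> simp

section Unconditional

variable {ι X : Type*} [NormedAddCommGroup X] [NormedSpace ℝ X]

def HasUnconditionalConstant (x : ι → X) (β : ℝ) : Prop :=
  ∀ (s : Finset ι) (a θ : ι → ℝ), (∀ i, θ i = 1 ∨ θ i = -1) →
    ‖∑ i ∈ s, (θ i * a i) • x i‖ ≤ β * ‖∑ i ∈ s, a i • x i‖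

namespace HasUnconditionalConstant

variable {x : ι → X} {β : ℝ}

theorem norm_sum_le_mul_norm_sum_mul (hx : HasUnconditionalConstant x β) (s : Finset ι)
    (a : ι → ℝ) {θ : ι → ℝ} (hθ : ∀ i, θ i = 1 ∨ θ i = -1) :
    ‖∑ i ∈ s, a i • x i‖ ≤ β * ‖∑ i ∈ s, (θ i * a i) • x i‖ := by
  have hθθ : ∀ i, θ i * (θ i * a i) = a i := fun i => by rcases hθ i with h | h <;> simp [h]
  simpa only [hθθ] using hx s (fun i => θ i * a i) θ hθ

theorem norm_sum_le_mul_norm_sum_abs (hx : HasUnconditionalConstant x β) (s : Finset ι)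
    (a : ι → ℝ) : ‖∑ i ∈ s, a i • x i‖ ≤ β * ‖∑ i ∈ s, |a i| • x i‖ := by
  have hsign : ∀ i, (if 0 ≤ a i then 1 else -1) * a i = |a i| := fun i => by
    split_ifs with h
    · rw [one_mul, abs_of_nonneg h]
    · rw [neg_one_mul, abs_of_neg (not_le.1 h)]
  simpa only [hsign] using
    hx.norm_sum_le_mul_norm_sum_mul s a (θ := fun i => if 0 ≤ a i then 1 else -1)
      fun i => by split_ifs <;> simp

theorem sum_eq_zero_of_neg (hx : HasUnconditionalConstant x β) (hβ : β < 0) (s : Finset ι)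
    (a : ι → ℝ) : ∑ i ∈ s, a i • x i = 0 := by
  have h := hx s a 1 fun _ => Or.inl rfl
  simp only [Pi.one_apply, one_mul] at h
  exact norm_le_zero_iff.1 (by nlinarith [norm_nonneg (∑ i ∈ s, a i • x i)])

end HasUnconditionalConstant

theorem norm_le_of_sum_eq_card_smul [Fintype ι] [Nonempty ι] {y : X} {z : ι → X} {C : ℝ}
    (h : ∑ i, z i = (Fintype.card ι : ℝ) • y) (hz : ∀ i, ‖z i‖ ≤ C) : ‖y‖ ≤ C := by
  have hcard : (0 : ℝ) < Fintype.card ι := by exact_mod_cast Fintype.card_pos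
  refine le_of_mul_le_mul_left ?_ hcard
  calc (Fintype.card ι : ℝ) * ‖y‖ = ‖∑ i, z i‖ := by
        rw [h, norm_smul, Real.norm_of_nonneg hcard.le]
    _ ≤ ∑ i, ‖z i‖ := norm_sum_le _ _
    _ ≤ ∑ _i : ι, C := Finset.sum_le_sum fun i _ => hz i
    _ = Fintype.card ι * C := by simp

end Unconditional

def level : ℕ → Finset (List Bool)
  | 0 => {[]}
  | n + 1 => (level n).biUnion fun α => {α ++ [true], α ++ [false]}

theorem mem_level {n : ℕ} {α : List Bool} : α ∈ level n ↔ α.length = n := by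
  induction n generalizing α with
  | zero => simp [level]
  | succ n ih =>
    simp only [level, Finset.mem_biUnion, Finset.mem_insert, Finset.mem_singleton, ih]
    constructor
    · rintro ⟨γ, rfl, rfl | rfl⟩ <;> simp
    · intro h
      obtain rfl | ⟨γ, c, rfl⟩ := α.eq_nil_or_concat'
      · simp at h
      · exact ⟨γ, by simpa using h, by cases c <;> simp⟩

theorem sum_level_succ {M : Type*} [AddCommMonoid M] (n : ℕ) (f : List Bool → M) :
    ∑ α ∈ level (n + 1), f α = ∑ α ∈ level n, (f (α ++ [true]) + f (α ++ [false])) := by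
  rw [level, Finset.sum_biUnion]
  · exact Finset.sum_congr rfl fun α _ => Finset.sum_pair (by simp)
  · intro α _ γ _ hne
    simp only [Function.onFun, Finset.disjoint_left, Finset.mem_insert, Finset.mem_singleton]
    rintro l (rfl | rfl) h <;> rcases h with h | h <;> exact hne (List.append_inj' h rfl).1

theorem sum_biUnion_level {M : Type*} [AddCommMonoid M] (N : ℕ) (f : List Bool → M) :
    ∑ α ∈ (Finset.range N).biUnion level, f α = ∑ m ∈ Finset.range N, ∑ α ∈ level m, f α :=
  Finset.sum_biUnion fun _ _ _ _ hmn => Finset.disjoint_left.2 fun _ hm hn =>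
    hmn ((mem_level.1 hm).symm.trans (mem_level.1 hn))

def rieszWeight (b : List Bool → ℝ) (σ : ℕ → ℝ) (α : List Bool) : ℝ :=
  ∏ k ∈ Finset.range α.length, (1 + boolSign (α.getD k true) * σ k * b (α.take k))

section RieszWeight

variable {b : List Bool → ℝ} {σ : ℕ → ℝ}

@[simp] theorem rieszWeight_nil : rieszWeight b σ [] = 1 := rfl

theorem rieszWeight_append_singleton (α : List Bool) (c : Bool) :
    rieszWeight b σ (α ++ [c]) = rieszWeight b σ α * (1 + boolSign c * σ α.length * b α) := by
  rw [rieszWeight, List.length_append, List.length_singleton, Finset.prod_range_succ]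
  congr 1
  · refine Finset.prod_congr rfl fun k hk => ?_
    have hk' := Finset.mem_range.1 hk
    rw [List.getD_append _ _ _ _ hk', List.take_append_of_le_length hk'.le]
  · rw [List.take_left, List.getD_append_right _ _ _ _ le_rfl]
    simp

theorem rieszWeight_nonneg (hb : ∀ γ, 0 ≤ b γ ∧ b γ ≤ 1) (hσ : ∀ k, |σ k| ≤ 1)
    (α : List Bool) : 0 ≤ rieszWeight b σ α := by
  refine Finset.prod_nonneg fun k _ => ?_
  have h : |boolSign (α.getD k true) * σ k * b (α.take k)| ≤ 1 := by
    rw [abs_mul, abs_mul, abs_boolSign, one_mul, abs_of_nonneg (hb _).1]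
    exact mul_le_one₀ (hσ k) (hb _).1 (hb _).2
  linarith [neg_abs_le (boolSign (α.getD k true) * σ k * b (α.take k))]

end RieszWeight

def signSeq {N : ℕ} (σ : Fin N → Bool) (k : ℕ) : ℝ :=
  if h : k < N then boolSign (σ ⟨k, h⟩) else 1

theorem signSeq_eq_one_or_eq_neg_one {N : ℕ} (σ : Fin N → Bool) (k : ℕ) :
    signSeq σ k = 1 ∨ signSeq σ k = -1 := by
  unfold signSeq
  split_ifs
  · cases σ _ <;> simp
  · simp

/-- The factors of `rieszWeight b (signSeq σ) α` depend on distinct coordinates of `σ` and have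
mean `1`. -/
theorem sum_rieszWeight_signSeq (b : List Bool → ℝ) {N : ℕ} {α : List Bool}
    (hα : α.length ≤ N) : ∑ σ : Fin N → Bool, rieszWeight b (signSeq σ) α = 2 ^ N := by
  let f : Fin N → Bool → ℝ := fun k c =>
    if (k : ℕ) < α.length then 1 + boolSign (α.getD k true) * boolSign c * b (α.take k) else 1
  have hprod : ∀ σ : Fin N → Bool, rieszWeight b (signSeq σ) α = ∏ k, f k (σ k) := by
    intro σ
    let g : ℕ → ℝ := fun k =>
      if k < α.length then 1 + boolSign (α.getD k true) * signSeq σ k * b (α.take k) else 1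
    calc rieszWeight b (signSeq σ) α = ∏ k ∈ Finset.range α.length, g k :=
          Finset.prod_congr rfl fun k hk => (if_pos (Finset.mem_range.1 hk)).symm
      _ = ∏ k ∈ Finset.range N, g k :=
          Finset.prod_subset (Finset.range_subset_range.2 hα) fun k _ hk =>
            if_neg (by simpa using hk)
      _ = ∏ k, f k (σ k) := by
          rw [← Fin.prod_univ_eq_prod_range]
          exact Finset.prod_congr rfl fun k _ => by simp [g, f, signSeq]
  have hfactor : ∀ k, ∑ c, f k c = 2 := fun k => by
    simp only [f, Fintype.sum_bool]
    split_ifs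
    · simp only [boolSign_true, boolSign_false]
      ring
    · norm_num
  simp_rw [hprod, ← Fintype.prod_sum, hfactor, Finset.prod_const, Finset.card_univ,
    Fintype.card_fin]

namespace IsTreeOn

variable {μ : Measure Ω} {A : Set Ω} {t : List Bool → Set Ω}

theorem measureReal_append_singleton (ht : IsTreeOn μ A t) (α : List Bool) (c : Bool) :
    μ.real (t (α ++ [c])) = μ.real (t α) / 2 := by
  have h : μ (t α) = 2 * μ (t (α ++ [c])) := by
    rw [← ht.union α, measure_union (ht.disj α) (ht.meas _), two_mul]
    cases c <;> rw [ht.eqmeas]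
  rw [measureReal_def, measureReal_def, h, ENNReal.toReal_mul]
  simp

theorem sum_rieszWeight_mul_measureReal (ht : IsTreeOn μ A t) (b : List Bool → ℝ)
    (σ : ℕ → ℝ) (N : ℕ) : ∑ α ∈ level N, rieszWeight b σ α * μ.real (t α) = μ.real A := by
  induction N with
  | zero => simp [level, ht.root]
  | succ N ih =>
    rw [sum_level_succ, ← ih]
    refine Finset.sum_congr rfl fun α _ => ?_
    rw [rieszWeight_append_singleton, rieszWeight_append_singleton,
      ht.measureReal_append_singleton, ht.measureReal_append_singleton, boolSign_true,
      boolSign_false]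
    ring

variable [IsFiniteMeasure μ]

def indicatorLp (ht : IsTreeOn μ A t) (α : List Bool) : Lp ℝ 1 μ :=
  indicatorConstLp 1 (ht.meas α) (measure_ne_top μ _) 1

theorem indicatorLp_eq_add (ht : IsTreeOn μ A t) (α : List Bool) :
    ht.indicatorLp α = ht.indicatorLp (α ++ [true]) + ht.indicatorLp (α ++ [false]) := by
  rw [indicatorLp, indicatorLp, indicatorLp,
    ← indicatorConstLp_disjoint_union _ _ _ _ (ht.disj α)]
  congr 1
  exact (ht.union α).symm

theorem norm_indicatorLp (ht : IsTreeOn μ A t) (α : List Bool) :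
    ‖ht.indicatorLp α‖ = μ.real (t α) := by
  rw [indicatorLp, norm_indicatorConstLp one_ne_zero one_ne_top]
  simp

theorem haarFn_eq_sub (ht : IsTreeOn μ A t) (α : List Bool) :
    haarFn μ 1 t ht.meas α = ht.indicatorLp (α ++ [true]) - ht.indicatorLp (α ++ [false]) :=
  rfl

def rieszProduct (ht : IsTreeOn μ A t) (b : List Bool → ℝ) (σ : ℕ → ℝ) (N : ℕ) : Lp ℝ 1 μ :=
  ∑ α ∈ level N, rieszWeight b σ α • ht.indicatorLp α

theorem rieszProduct_succ (ht : IsTreeOn μ A t) (b : List Bool → ℝ) (σ : ℕ → ℝ) (N : ℕ) :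
    ht.rieszProduct b σ (N + 1) = ht.rieszProduct b σ N +
      ∑ α ∈ level N, (σ α.length * (b α * rieszWeight b σ α)) • haarFn μ 1 t ht.meas α := by
  rw [rieszProduct, sum_level_succ, rieszProduct, ← Finset.sum_add_distrib]
  refine Finset.sum_congr rfl fun α _ => ?_
  rw [rieszWeight_append_singleton, rieszWeight_append_singleton, ht.haarFn_eq_sub,
    ht.indicatorLp_eq_add α, boolSign_true, boolSign_false]
  module

theorem rieszProduct_sub_indicatorLp_nil (ht : IsTreeOn μ A t) (b : List Bool → ℝ)
    (σ : ℕ → ℝ) (N : ℕ) :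
    ht.rieszProduct b σ N - ht.indicatorLp [] = ∑ α ∈ (Finset.range N).biUnion level,
      (σ α.length * (b α * rieszWeight b σ α)) • haarFn μ 1 t ht.meas α := by
  rw [sum_biUnion_level]
  induction N with
  | zero => simp [rieszProduct, level]
  | succ N ih => rw [Finset.sum_range_succ, ← ih, rieszProduct_succ]; abel

variable {b : List Bool → ℝ} {σ : ℕ → ℝ}

theorem norm_rieszProduct_sub_indicatorLp_nil_le (ht : IsTreeOn μ A t)
    (hb : ∀ γ, 0 ≤ b γ ∧ b γ ≤ 1) (hσ : ∀ k, |σ k| ≤ 1) (N : ℕ) :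
    ‖ht.rieszProduct b σ N - ht.indicatorLp []‖ ≤ 2 * μ.real A := by
  have hprod : ‖ht.rieszProduct b σ N‖ ≤ μ.real A :=
    calc ‖ht.rieszProduct b σ N‖ ≤ ∑ α ∈ level N, ‖rieszWeight b σ α • ht.indicatorLp α‖ :=
          norm_sum_le _ _
      _ = μ.real A := by
          rw [← ht.sum_rieszWeight_mul_measureReal b σ N]
          refine Finset.sum_congr rfl fun α _ => ?_
          rw [norm_smul, norm_indicatorLp, Real.norm_of_nonneg (rieszWeight_nonneg hb hσ α)]
  calc _ ≤ ‖ht.rieszProduct b σ N‖ + ‖ht.indicatorLp []‖ := norm_sub_le _ _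
    _ ≤ μ.real A + μ.real A := by rw [norm_indicatorLp, ht.root]; gcongr
    _ = 2 * μ.real A := by ring

variable {X : Type*} [NormedAddCommGroup X] [NormedSpace ℝ X] {U : Lp ℝ 1 μ →L[ℝ] X} {β : ℝ}

theorem norm_sum_mul_rieszWeight_smul_map_haarFn_le (ht : IsTreeOn μ A t)
    (hU : HasUnconditionalConstant (fun α => U (haarFn μ 1 t ht.meas α)) β) (hβ : 0 ≤ β)
    (hb : ∀ γ, 0 ≤ b γ ∧ b γ ≤ 1) (hσ : ∀ k, σ k = 1 ∨ σ k = -1) (N : ℕ) :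
    ‖∑ α ∈ (Finset.range N).biUnion level,
        (b α * rieszWeight b σ α) • U (haarFn μ 1 t ht.meas α)‖ ≤ 2 * β * ‖U‖ * μ.real A := by
  have hσ' : ∀ k, |σ k| ≤ 1 := fun k => by rcases hσ k with h | h <;> simp [h]
  calc _ ≤ β * ‖∑ α ∈ (Finset.range N).biUnion level,
            (σ α.length * (b α * rieszWeight b σ α)) • U (haarFn μ 1 t ht.meas α)‖ :=
        hU.norm_sum_le_mul_norm_sum_mul _ _ fun α => hσ α.length
    _ = β * ‖U (ht.rieszProduct b σ N - ht.indicatorLp [])‖ := by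
        simp only [rieszProduct_sub_indicatorLp_nil, map_sum, map_smul]
    _ ≤ β * (‖U‖ * (2 * μ.real A)) := by
        gcongr
        exact U.le_opNorm_of_le (ht.norm_rieszProduct_sub_indicatorLp_nil_le hb hσ' N)
    _ = 2 * β * ‖U‖ * μ.real A := by ring

theorem norm_sum_smul_map_haarFn_le (ht : IsTreeOn μ A t)
    (hU : HasUnconditionalConstant (fun α => U (haarFn μ 1 t ht.meas α)) β) (hβ : 0 ≤ β)
    (s : Finset (List Bool)) (hb : ∀ α ∈ s, 0 ≤ b α ∧ b α ≤ 1) :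
    ‖∑ α ∈ s, b α • U (haarFn μ 1 t ht.meas α)‖ ≤ 2 * β * ‖U‖ * μ.real A := by
  classical
  set N := s.sup List.length + 1
  set b' : List Bool → ℝ := fun α => if α ∈ s then b α else 0
  have hb' : ∀ α, 0 ≤ b' α ∧ b' α ≤ 1 := fun α => by
    by_cases h : α ∈ s <;> simp [b', h, hb]
  have hs : s ⊆ (Finset.range N).biUnion level := fun α hα => Finset.mem_biUnion.2
    ⟨α.length, Finset.mem_range.2 (Nat.lt_succ_of_le (Finset.le_sup hα)), mem_level.2 rfl⟩
  have hsum : ∑ α ∈ s, b α • U (haarFn μ 1 t ht.meas α) =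
      ∑ α ∈ (Finset.range N).biUnion level, b' α • U (haarFn μ 1 t ht.meas α) := by
    rw [← Finset.sum_subset hs fun α _ hα => by simp [b', hα]]
    exact Finset.sum_congr rfl fun α hα => by simp [b', hα]
  rw [hsum]
  refine norm_le_of_sum_eq_card_smul (z := fun σ : Fin N → Bool =>
      ∑ α ∈ (Finset.range N).biUnion level,
        (b' α * rieszWeight b' (signSeq σ) α) • U (haarFn μ 1 t ht.meas α)) ?_
    fun σ => ht.norm_sum_mul_rieszWeight_smul_map_haarFn_le hU hβ hb'
      (signSeq_eq_one_or_eq_neg_one σ) N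
  rw [Finset.sum_comm, Finset.smul_sum]
  refine Finset.sum_congr rfl fun α hα => ?_
  obtain ⟨m, hm, hαm⟩ := Finset.mem_biUnion.1 hα
  have hαN : α.length ≤ N := (mem_level.1 hαm).trans_lt (Finset.mem_range.1 hm) |>.le
  rw [← Finset.sum_smul, ← Finset.mul_sum, sum_rieszWeight_signSeq b' hαN, smul_smul]
  simp [mul_comm]

end IsTreeOn

theorem norm_map_haar_le_general
    (μ : Measure Ω) [IsProbabilityMeasure μ]
    {X : Type*} [NormedAddCommGroup X] [NormedSpace ℝ X]
    (A : Set Ω)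
    (t : List Bool → Set Ω) (ht : IsTreeOn μ A t)
    (U : Lp ℝ 1 μ →L[ℝ] X) (β : ℝ)
    (hunc : ∀ (s : Finset (List Bool)) (a θ : List Bool → ℝ),
      (∀ α, θ α = 1 ∨ θ α = -1) →
      ‖∑ α ∈ s, (θ α * a α) • U (haarFn μ 1 t ht.meas α)‖ ≤
        β * ‖∑ α ∈ s, a α • U (haarFn μ 1 t ht.meas α)‖) :
    ∀ (s : Finset (List Bool)) (a : List Bool → ℝ) (δ : ℝ), 0 ≤ δ →
      (∀ α ∈ s, |a α| ≤ δ) →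
      ‖U (∑ α ∈ s, a α • haarFn μ 1 t ht.meas α)‖ ≤
        2 * β ^ 2 * ‖U‖ * (μ A).toReal * δ := by
  intro s a δ hδ ha
  have hU : HasUnconditionalConstant (fun α => U (haarFn μ 1 t ht.meas α)) β := hunc
  simp only [map_sum, map_smul]
  rcases lt_or_ge β 0 with hβ | hβ
  · rw [hU.sum_eq_zero_of_neg hβ, norm_zero]
    exact mul_nonneg (by positivity) hδ
  have hb : ∀ α ∈ s, 0 ≤ |a α| / δ ∧ |a α| / δ ≤ 1 := fun α hα =>
    ⟨by positivity, div_le_one_of_le₀ (ha α hα) hδ⟩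
  have habs : ∑ α ∈ s, |a α| • U (haarFn μ 1 t ht.meas α) =
      δ • ∑ α ∈ s, (|a α| / δ) • U (haarFn μ 1 t ht.meas α) := by
    rw [Finset.smul_sum]
    refine Finset.sum_congr rfl fun α hα => ?_
    rw [smul_smul, mul_div_cancel_of_imp' fun h => le_antisymm (h ▸ ha α hα) (abs_nonneg _)]
  calc ‖∑ α ∈ s, a α • U (haarFn μ 1 t ht.meas α)‖
      ≤ β * ‖∑ α ∈ s, |a α| • U (haarFn μ 1 t ht.meas α)‖ := hU.norm_sum_le_mul_norm_sum_abs s a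
    _ = β * (δ * ‖∑ α ∈ s, (|a α| / δ) • U (haarFn μ 1 t ht.meas α)‖) := by
        rw [habs, norm_smul, Real.norm_of_nonneg hδ]
    _ ≤ β * (δ * (2 * β * ‖U‖ * μ.real A)) := by
        gcongr
        exact ht.norm_sum_smul_map_haarFn_le hU hβ s hb
    _ = 2 * β ^ 2 * ‖U‖ * (μ A).toReal * δ := by rw [measureReal_def]; ring

/-- Lemma 4.1, quantitative form. Let `(h_α)` be a Haar-like system
on `A` in `L₁(μ)` and let `U : L₁ → X` map `(h_α)` into an unconditional basic sequence
with unconditional constant `β`. Then for all finitely supported scalars `(a_α)` with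
`|a_α| ≤ δ`, one has `‖U (∑ a_α h_α)‖ ≤ 2 β² ‖U‖ μ(A) δ`. -/
theorem norm_map_haar_le
    (μ : Measure Ω) [IsProbabilityMeasure μ] [NullSingletonClass μ]
    {X : Type*} [NormedAddCommGroup X] [NormedSpace ℝ X] [CompleteSpace X]
    (A : Set Ω) (hA : MeasurableSet A) (hA0 : 0 < μ A)
    (t : List Bool → Set Ω) (ht : IsTreeOn μ A t)
    (U : Lp ℝ 1 μ →L[ℝ] X) (β : ℝ)
    (hunc : ∀ (s : Finset (List Bool)) (a θ : List Bool → ℝ),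
      (∀ α, θ α = 1 ∨ θ α = -1) →
      ‖∑ α ∈ s, (θ α * a α) • U (haarFn μ 1 t ht.meas α)‖ ≤
        β * ‖∑ α ∈ s, a α • U (haarFn μ 1 t ht.meas α)‖) :
    ∀ (s : Finset (List Bool)) (a : List Bool → ℝ) (δ : ℝ), 0 ≤ δ →
      (∀ α ∈ s, |a α| ≤ δ) →
      ‖U (∑ α ∈ s, a α • haarFn μ 1 t ht.meas α)‖ ≤
        2 * β ^ 2 * ‖U‖ * (μ A).toReal * δ :=
  norm_map_haar_le_general μ A t ht U β hunc
end
end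

section
/- Let 1 ≤ p < ∞ and equip [0,1]² and [0,1] with Lebesgue measure. There is a bounded linear operator T: L_p([0,1]²) → L_p[0,1] satisfying (Tf)(s) = ∫₀¹ f(s,t) dt for almost every s, for every f ∈ L_p([0,1]²); this operator T is PP-narrow but not hereditarily PP-narrow. -/
open MeasureTheory ENNReal Set Filter

noncomputable section

variable {Ω : Type*} [MeasurableSpace Ω]

/-- Lebesgue measure on the unit square `[0,1]²` is a probability measure. -/
instance : IsProbabilityMeasure
    ((volume : Measure (ℝ × ℝ)).restrict (Set.Icc (0:ℝ) 1 ×ˢ Set.Icc (0:ℝ) 1)) := by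
  constructor
  rw [Measure.restrict_apply_univ, Measure.volume_eq_prod, Measure.prod_prod,
    Real.volume_Icc]
  norm_num

/-- Lebesgue measure on the unit interval `[0,1]` is a probability measure. -/
instance : IsProbabilityMeasure ((volume : Measure ℝ).restrict (Set.Icc (0:ℝ) 1)) := by
  constructor
  rw [Measure.restrict_apply_univ, Real.volume_Icc]
  norm_num

/-! ### Auxiliary development -/

/-- The restricted Lebesgue measure on `[0,1]`. -/
abbrev nu : Measure ℝ := (volume : Measure ℝ).restrict (Set.Icc (0:ℝ) 1)

/-- The unit square. -/
abbrev usq : Set (ℝ × ℝ) := Set.Icc (0:ℝ) 1 ×ˢ Set.Icc (0:ℝ) 1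

/-- The restricted Lebesgue measure on the unit square. -/
abbrev MM : Measure (ℝ × ℝ) := (volume : Measure (ℝ × ℝ)).restrict usq

theorem key : MM = nu.prod nu := by
  rw [Measure.prod_restrict, ← Measure.volume_eq_prod ℝ ℝ]

theorem memLp_transfer {α : Type*} [MeasurableSpace α] {μ μ' : Measure α} (h : μ = μ')
    {p : ℝ≥0∞} {g : α → ℝ} (hg : MemLp g p μ) : MemLp g p μ' := h ▸ hg

theorem ae_transfer {α : Type*} [MeasurableSpace α] {μ μ' : Measure α} (h : μ = μ')
    {P : α → Prop} (hg : ∀ᵐ x ∂μ, P x) : ∀ᵐ x ∂μ', P x := h ▸ hg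

theorem opBound {α β : Type*} [MeasurableSpace α] [MeasurableSpace β] {μa : Measure α}
    {νb : Measure β} [SFinite μa] [IsProbabilityMeasure νb] {p : ℝ≥0∞} (hp1 : 1 ≤ p)
    (hp : p ≠ ∞) {g : α × β → ℝ} (hg : AEStronglyMeasurable g (μa.prod νb)) :
    eLpNorm (fun s ↦ ∫ t, g (s, t) ∂νb) p μa ≤ eLpNorm g p (μa.prod νb) := by
  have h0 : p ≠ 0 := (lt_of_lt_of_le zero_lt_one hp1).ne'
  have hq0 : 0 < p.toReal := ENNReal.toReal_pos h0 hp
  rw [eLpNorm_eq_lintegral_rpow_enorm_toReal h0 hp, eLpNorm_eq_lintegral_rpow_enorm_toReal h0 hp]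
  refine ENNReal.rpow_le_rpow ?_ (by positivity)
  rw [lintegral_prod _ (hg.enorm.pow_const p.toReal)]
  refine lintegral_mono_ae ?_
  filter_upwards [hg.prodMk_left] with s hs
  calc (‖∫ t, g (s,t) ∂νb‖₊ : ℝ≥0∞) ^ p.toReal
      ≤ (∫⁻ t, ‖g (s,t)‖₊ ∂νb) ^ p.toReal :=
        ENNReal.rpow_le_rpow (enorm_integral_le_lintegral_enorm _) hq0.le
    _ = (eLpNorm (fun t => g (s,t)) 1 νb) ^ p.toReal := by
        rw [eLpNorm_one_eq_lintegral_enorm]; rfl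
    _ ≤ (eLpNorm (fun t => g (s,t)) p νb) ^ p.toReal :=
        ENNReal.rpow_le_rpow (eLpNorm_le_eLpNorm_of_exponent_le hp1 hs) hq0.le
    _ = ∫⁻ t, (‖g (s,t)‖₊ : ℝ≥0∞) ^ p.toReal ∂νb := by
        rw [eLpNorm_eq_lintegral_rpow_enorm_toReal h0 hp, ← ENNReal.rpow_mul, one_div,
          inv_mul_cancel₀ hq0.ne', ENNReal.rpow_one]; rfl

variable {p : ℝ≥0∞} [Fact (1 ≤ p)]

theorem memTp (hp : p ≠ ∞) (f : Lp ℝ p MM) :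
    MemLp (fun s => ∫ t, (f : ℝ × ℝ → ℝ) (s, t) ∂nu) p nu := by
  have hm : MemLp (⇑f) p (nu.prod nu) := memLp_transfer key (Lp.memLp f)
  refine ⟨hm.aestronglyMeasurable.integral_prod_right', ?_⟩
  exact lt_of_le_of_lt (opBound Fact.out hp hm.aestronglyMeasurable) hm.2

theorem slice_int (f : Lp ℝ p MM) :
    ∀ᵐ s ∂nu, Integrable (fun t => (f : ℝ × ℝ → ℝ) (s, t)) nu := by
  have hm : MemLp (⇑f) p (nu.prod nu) := memLp_transfer key (Lp.memLp f)
  exact (memLp_one_iff_integrable.1 (hm.mono_exponent Fact.out)).prod_right_ae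

/-- The operator `T f = (s ↦ ∫ f (s, t) dt)` as a continuous linear map. -/
def Tint (hp : p ≠ ∞) : Lp ℝ p MM →L[ℝ] Lp ℝ p nu :=
  LinearMap.mkContinuous
    { toFun := fun f => (memTp hp f).toLp _
      map_add' := by
        intro f g
        rw [← MemLp.toLp_add]
        refine MemLp.toLp_congr _ _ ?_
        have hadd : ∀ᵐ z ∂(nu.prod nu), (⇑(f + g) : ℝ × ℝ → ℝ) z = (⇑f + ⇑g) z :=
          ae_transfer key (Lp.coeFn_add f g)
        filter_upwards [slice_int f, slice_int g,
          Measure.ae_ae_of_ae_prod hadd] with s h1 h2 h3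
        calc ∫ t, (⇑(f + g) : ℝ × ℝ → ℝ) (s, t) ∂nu
            = ∫ t, ((f : ℝ × ℝ → ℝ) (s, t) + (g : ℝ × ℝ → ℝ) (s, t)) ∂nu :=
              integral_congr_ae h3
          _ = _ := integral_add h1 h2
      map_smul' := by
        intro c f
        simp only [RingHom.id_apply]
        rw [← MemLp.toLp_const_smul c (memTp hp f)]
        refine MemLp.toLp_congr (memTp hp (c • f)) ((memTp hp f).const_smul c) ?_
        have hsmul : ∀ᵐ z ∂(nu.prod nu), (⇑(c • f) : ℝ × ℝ → ℝ) z = (c • ⇑f) z :=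
          ae_transfer key (Lp.coeFn_smul c f)
        filter_upwards [Measure.ae_ae_of_ae_prod hsmul] with s h3
        calc ∫ t, (⇑(c • f) : ℝ × ℝ → ℝ) (s, t) ∂nu
            = ∫ t, c • (f : ℝ × ℝ → ℝ) (s, t) ∂nu := integral_congr_ae h3
          _ = c • ∫ t, (f : ℝ × ℝ → ℝ) (s, t) ∂nu := integral_smul c _ } 1
    (by
      intro f
      rw [one_mul]
      dsimp only [LinearMap.coe_mk, AddHom.coe_mk]
      rw [Lp.norm_toLp, Lp.norm_def]
      have hE : eLpNorm (⇑f) p MM = eLpNorm (⇑f) p (nu.prod nu) :=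
        congrArg (fun m => eLpNorm (⇑f) p m) key
      rw [hE]
      have hm : MemLp (⇑f) p (nu.prod nu) := memLp_transfer key (Lp.memLp f)
      exact ENNReal.toReal_mono hm.2.ne (opBound Fact.out hp hm.aestronglyMeasurable))

theorem Tint_spec (hp : p ≠ ∞) (f : Lp ℝ p MM) :
    ⇑(Tint hp f) =ᵐ[nu] fun s => ∫ t, (f : ℝ × ℝ → ℝ) (s, t) ∂nu :=
  (memTp hp f).coeFn_toLp

/-! ### One-dimensional halving -/

theorem nu_Iic_zero : nu (Iic (0:ℝ)) = 0 := by
  rw [Measure.restrict_apply' measurableSet_Icc]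
  refine measure_mono_null (fun x hx => ?_) (measure_singleton (0:ℝ))
  exact le_antisymm hx.1 hx.2.1

theorem nu_Iic_neg {τ : ℝ} (hτ : τ < 0) : nu (Iic τ) = 0 :=
  le_antisymm (le_trans (measure_mono (Iic_subset_Iic.2 hτ.le)) nu_Iic_zero.le) zero_le

theorem nu_Ioi_one : nu (Ioi (1:ℝ)) = 0 := by
  rw [Measure.restrict_apply' measurableSet_Icc]
  refine measure_mono_null (fun x hx => (hx.1.not_ge hx.2.2).elim) (measure_empty (μ := volume))

theorem nu_lip (E : Set ℝ) (a b : ℝ) (hab : a ≤ b) :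
    nu (E ∩ Iic b) ≤ nu (E ∩ Iic a) + ENNReal.ofReal (b - a) := by
  calc nu (E ∩ Iic b) ≤ nu ((E ∩ Iic a) ∪ Ioc a b) := measure_mono (by
        intro x hx
        rcases le_or_gt x a with h | h
        · exact Or.inl ⟨hx.1, h⟩
        · exact Or.inr ⟨h, hx.2⟩)
    _ ≤ nu (E ∩ Iic a) + nu (Ioc a b) := measure_union_le _ _
    _ ≤ nu (E ∩ Iic a) + ENNReal.ofReal (b - a) := by
        gcongr
        calc nu (Ioc a b) ≤ volume (Ioc a b) := Measure.restrict_apply_le _ _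
          _ = ENNReal.ofReal (b - a) := Real.volume_Ioc

theorem nu_cut_mono (E : Set ℝ) : Monotone fun τ => nu (E ∩ Iic τ) := fun _ _ hab =>
  measure_mono (inter_subset_inter_right _ (Iic_subset_Iic.2 hab))

theorem nu_cut_one (E : Set ℝ) : nu (E ∩ Iic 1) = nu E := by
  refine le_antisymm (measure_mono inter_subset_left) ?_
  calc nu E ≤ nu ((E ∩ Iic 1) ∪ Ioi 1) := measure_mono (by
        intro x hx
        rcases le_or_gt x 1 with h | h
        · exact Or.inl ⟨hx, h⟩
        · exact Or.inr h)
    _ ≤ nu (E ∩ Iic 1) + nu (Ioi 1) := measure_union_le _ _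
    _ = nu (E ∩ Iic 1) := by rw [nu_Ioi_one, add_zero]

theorem cut (E : Set ℝ) :
    ∃ τ ∈ Icc (0:ℝ) 1, nu (E ∩ Iic τ) = nu E / 2 := by
  have hfin : ∀ s : Set ℝ, nu s ≠ ∞ := fun s => measure_ne_top _ _
  set c : ℝ → ℝ := fun τ => (nu (E ∩ Iic τ)).toReal with hc
  have hcmono : Monotone c := fun a b hab =>
    ENNReal.toReal_mono (hfin _) (nu_cut_mono E hab)
  have hclip : ∀ a b : ℝ, a ≤ b → c b ≤ c a + (b - a) := by
    intro a b hab
    have h2 := ENNReal.toReal_mono (by finiteness) (nu_lip E a b hab)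
    rwa [ENNReal.toReal_add (hfin _) ofReal_ne_top,
      ENNReal.toReal_ofReal (sub_nonneg.2 hab)] at h2
  have hcont : Continuous c := by
    refine (LipschitzWith.of_dist_le_mul (K := 1) fun x y => ?_).continuous
    push_cast
    rcases le_total x y with h | h
    · rw [Real.dist_eq, Real.dist_eq, abs_of_nonpos (sub_nonpos.2 (hcmono h)),
        abs_of_nonpos (sub_nonpos.2 h)]
      have := hclip x y h; linarith
    · rw [Real.dist_eq, Real.dist_eq, abs_of_nonneg (sub_nonneg.2 (hcmono h)),
        abs_of_nonneg (sub_nonneg.2 h)]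
      have := hclip y x h; linarith
  have hc0 : c 0 = 0 := by
    have h1 : nu (E ∩ Iic 0) = 0 :=
      le_antisymm ((measure_mono inter_subset_right).trans nu_Iic_zero.le) zero_le
    simp only [hc]
    rw [h1, ENNReal.toReal_zero]
  have hc1 : c 1 = (nu E).toReal := by rw [hc]; simp [nu_cut_one E]
  have hmem : (nu E).toReal / 2 ∈ Icc (c 0) (c 1) := by
    constructor
    · rw [hc0]; positivity
    · rw [hc1]; linarith [ENNReal.toReal_nonneg (a := nu E)]
  obtain ⟨τ, hτ, hcτ⟩ := intermediate_value_Icc (zero_le_one (α := ℝ)) hcont.continuousOn hmem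
  refine ⟨τ, hτ, ?_⟩
  have hne : nu E / 2 ≠ ∞ := ne_top_of_le_ne_top (hfin E) ENNReal.half_le_self
  rw [← ENNReal.toReal_eq_toReal_iff' (hfin _) hne, ENNReal.toReal_div]
  rw [hc] at hcτ
  simp only at hcτ
  rw [hcτ]
  norm_num

def cutW (E : Set ℝ) : Set ℝ := {τ | τ ∈ Icc (0:ℝ) 1 ∧ nu E / 2 ≤ nu (E ∩ Iic τ)}

def cutPt (E : Set ℝ) : ℝ := sInf (cutW E)

theorem cutW_lb (E : Set ℝ) : ∀ τ ∈ cutW E, (0:ℝ) ≤ τ := fun _ hτ => hτ.1.1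

theorem cutW_bdd (E : Set ℝ) : BddBelow (cutW E) := ⟨0, cutW_lb E⟩

theorem cutW_ne (E : Set ℝ) : (cutW E).Nonempty := by
  obtain ⟨τ₀, hτ₀, heq⟩ := cut E
  exact ⟨τ₀, hτ₀, heq.ge⟩

theorem cutPt_nonneg (E : Set ℝ) : 0 ≤ cutPt E := le_csInf (cutW_ne E) (cutW_lb E)

theorem cutPt_le_one (E : Set ℝ) : cutPt E ≤ 1 := by
  obtain ⟨τ₀, hτ₀, heq⟩ := cut E
  exact le_trans (csInf_le (cutW_bdd E) ⟨hτ₀, heq.ge⟩) hτ₀.2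

theorem cutPt_half (E : Set ℝ) : nu (E ∩ Iic (cutPt E)) = nu E / 2 := by
  have hfin : ∀ s : Set ℝ, nu s ≠ ∞ := fun s => measure_ne_top _ _
  refine le_antisymm ?_ ?_
  · refine ENNReal.le_of_forall_pos_le_add fun ε hε _ => ?_
    have hε' : (0:ℝ) < ε := hε
    have hle : nu (E ∩ Iic (cutPt E)) ≤
        nu (E ∩ Iic (cutPt E - ε)) + ENNReal.ofReal (cutPt E - (cutPt E - ε)) :=
      nu_lip E _ _ (by linarith)
    have hGle : nu (E ∩ Iic (cutPt E - ε)) ≤ nu E / 2 := by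
      rcases lt_or_ge (cutPt E - (ε:ℝ)) 0 with hneg | hnonneg
      · calc nu (E ∩ Iic (cutPt E - ε)) ≤ nu (Iic (cutPt E - ε)) :=
              measure_mono inter_subset_right
          _ = 0 := nu_Iic_neg hneg
          _ ≤ nu E / 2 := zero_le
      · have hlt : cutPt E - (ε:ℝ) < cutPt E := by linarith
        have hnmem : cutPt E - (ε:ℝ) ∉ cutW E := notMem_of_lt_csInf hlt (cutW_bdd E)
        by_contra hcon
        exact hnmem ⟨⟨hnonneg, by linarith [cutPt_le_one E]⟩, (not_le.1 hcon).le⟩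
    calc nu (E ∩ Iic (cutPt E))
        ≤ nu E / 2 + ENNReal.ofReal (cutPt E - (cutPt E - ε)) := by
          refine hle.trans ?_; gcongr
      _ = nu E / 2 + (ε : ℝ≥0∞) := by
          rw [show cutPt E - (cutPt E - (ε:ℝ)) = (ε:ℝ) by ring, ENNReal.ofReal_coe_nnreal]
  · refine ENNReal.le_of_forall_pos_le_add fun ε hε _ => ?_
    have hε' : (0:ℝ) < ε := hε
    have hlt : cutPt E < cutPt E + (ε:ℝ) := by linarith
    obtain ⟨τ, hτW, hτlt⟩ := (csInf_lt_iff (cutW_bdd E) (cutW_ne E)).1 hlt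
    have hhsτ : cutPt E ≤ τ := csInf_le (cutW_bdd E) hτW
    calc nu E / 2 ≤ nu (E ∩ Iic τ) := hτW.2
      _ ≤ nu (E ∩ Iic (cutPt E)) + ENNReal.ofReal (τ - cutPt E) := nu_lip E _ _ hhsτ
      _ ≤ nu (E ∩ Iic (cutPt E)) + (ε : ℝ≥0∞) := by
          gcongr
          rw [← ENNReal.ofReal_coe_nnreal]
          exact ENNReal.ofReal_le_ofReal (by linarith)

def cutFun (A : Set (ℝ × ℝ)) (s : ℝ) : ℝ := cutPt (Prod.mk s ⁻¹' A)

theorem cutFun_measurable (A : Set (ℝ × ℝ)) (hA : MeasurableSet A) :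
    Measurable (cutFun A) := by
  have hGmeas : ∀ τ : ℝ, Measurable fun s => nu (Prod.mk s ⁻¹' A ∩ Iic τ) := by
    intro τ
    have heq : (fun s => nu (Prod.mk s ⁻¹' A ∩ Iic τ)) =
        fun s => nu (Prod.mk s ⁻¹' (A ∩ (univ ×ˢ Iic τ))) := by
      funext s
      rw [preimage_inter, mk_preimage_prod_right (mem_univ s)]
    rw [heq]
    exact measurable_measure_prodMk_left (hA.inter (MeasurableSet.univ.prod measurableSet_Iic))
  have hmmeas : Measurable fun s => nu (Prod.mk s ⁻¹' A) :=
    measurable_measure_prodMk_left hA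
  apply measurable_of_Iic
  intro τ
  rcases le_or_gt 1 τ with hτ1 | hτ1
  · have : cutFun A ⁻¹' Iic τ = univ :=
      eq_univ_of_forall fun s => le_trans (cutPt_le_one _) hτ1
    rw [this]; exact MeasurableSet.univ
  rcases lt_or_ge τ 0 with hτ0 | hτ0
  · have : cutFun A ⁻¹' Iic τ = ∅ := by
      refine eq_empty_iff_forall_notMem.2 fun s hs => ?_
      exact absurd (le_trans (cutPt_nonneg _) hs) hτ0.not_ge
    rw [this]; exact MeasurableSet.empty
  · have : cutFun A ⁻¹' Iic τ =
        {s | nu (Prod.mk s ⁻¹' A) / 2 ≤ nu (Prod.mk s ⁻¹' A ∩ Iic τ)} := by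
      ext s
      simp only [mem_preimage, mem_Iic, mem_setOf_eq]
      constructor
      · intro hle
        exact le_trans (cutPt_half _).ge (nu_cut_mono _ hle)
      · intro hle
        exact csInf_le (cutW_bdd _) ⟨⟨hτ0, hτ1.le⟩, hle⟩
    rw [this]
    exact measurableSet_le (hmmeas.div_const 2) (hGmeas τ)

theorem exists_halving (A : Set (ℝ × ℝ)) (hA : MeasurableSet A) :
    ∃ B : Set (ℝ × ℝ), MeasurableSet B ∧ B ⊆ A ∧
      ∀ s : ℝ, nu (Prod.mk s ⁻¹' B) = nu (Prod.mk s ⁻¹' A) / 2 ∧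
               nu (Prod.mk s ⁻¹' (A \ B)) = nu (Prod.mk s ⁻¹' A) / 2 := by
  have hfin : ∀ s : Set ℝ, nu s ≠ ∞ := fun s => measure_ne_top _ _
  refine ⟨A ∩ {z : ℝ × ℝ | z.2 ≤ cutFun A z.1},
    hA.inter (measurableSet_le measurable_snd ((cutFun_measurable A hA).comp measurable_fst)),
    inter_subset_left, fun s => ?_⟩
  have hslice : Prod.mk s ⁻¹' (A ∩ {z : ℝ × ℝ | z.2 ≤ cutFun A z.1}) =
      Prod.mk s ⁻¹' A ∩ Iic (cutFun A s) := by
    rw [preimage_inter]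
    rfl
  constructor
  · rw [hslice]; exact cutPt_half _
  · rw [preimage_diff, hslice]
    have hmeas₂ : MeasurableSet (Prod.mk s ⁻¹' A ∩ Iic (cutFun A s)) :=
      (measurable_prodMk_left hA).inter measurableSet_Iic
    rw [measure_diff inter_subset_left hmeas₂.nullMeasurableSet (hfin _),
      show nu (Prod.mk s ⁻¹' A ∩ Iic (cutFun A s)) = nu (Prod.mk s ⁻¹' A) / 2 from cutPt_half _]
    exact ENNReal.sub_half (hfin _)

/-! ### Computing `T` on signs -/

theorem Tint_sign (hp : p ≠ ∞) {B₁ B₂ : Set (ℝ × ℝ)} (h₁ : MeasurableSet B₁)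
    (h₂ : MeasurableSet B₂) :
    ⇑(Tint hp (indicatorConstLp p h₁ (measure_ne_top MM B₁) (1:ℝ) -
        indicatorConstLp p h₂ (measure_ne_top MM B₂) (1:ℝ))) =ᵐ[nu]
      fun s => (nu (Prod.mk s ⁻¹' B₁)).toReal - (nu (Prod.mk s ⁻¹' B₂)).toReal := by
  have hcoe : ⇑(indicatorConstLp p h₁ (measure_ne_top MM B₁) (1:ℝ) -
      indicatorConstLp p h₂ (measure_ne_top MM B₂) (1:ℝ)) =ᵐ[MM]
      fun z => B₁.indicator (fun _ => (1:ℝ)) z - B₂.indicator (fun _ => (1:ℝ)) z := by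
    filter_upwards [Lp.coeFn_sub (indicatorConstLp p h₁ (measure_ne_top MM B₁) (1:ℝ))
        (indicatorConstLp p h₂ (measure_ne_top MM B₂) (1:ℝ)),
      indicatorConstLp_coeFn (p := p) (hs := h₁) (hμs := measure_ne_top MM B₁) (c := (1:ℝ)),
      indicatorConstLp_coeFn (p := p) (hs := h₂) (hμs := measure_ne_top MM B₂) (c := (1:ℝ))]
      with z e1 e2 e3
    rw [e1, Pi.sub_apply, e2, e3]
  have hcoe2 := Measure.ae_ae_of_ae_prod (ae_transfer key hcoe)
  filter_upwards [Tint_spec hp _, hcoe2] with s e1 e2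
  rw [e1, integral_congr_ae e2]
  calc ∫ t, (B₁.indicator (fun _ => (1:ℝ)) (s, t) - B₂.indicator (fun _ => (1:ℝ)) (s, t)) ∂nu
      = ∫ t, ((Prod.mk s ⁻¹' B₁).indicator (fun _ => (1:ℝ)) t -
          (Prod.mk s ⁻¹' B₂).indicator (fun _ => (1:ℝ)) t) ∂nu := by
        refine integral_congr_ae (Eventually.of_forall fun t => ?_)
        by_cases hm1 : (s, t) ∈ B₁ <;> by_cases hm2 : (s, t) ∈ B₂ <;>
          simp [Set.indicator_apply, Set.mem_preimage, hm1, hm2]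
    _ = (∫ t, (Prod.mk s ⁻¹' B₁).indicator (fun _ => (1:ℝ)) t ∂nu) -
        ∫ t, (Prod.mk s ⁻¹' B₂).indicator (fun _ => (1:ℝ)) t ∂nu :=
        integral_sub ((integrable_const (1:ℝ)).indicator (measurable_prodMk_left h₁))
          ((integrable_const (1:ℝ)).indicator (measurable_prodMk_left h₂))
    _ = (nu (Prod.mk s ⁻¹' B₁)).toReal - (nu (Prod.mk s ⁻¹' B₂)).toReal := by
        rw [integral_indicator_const (1:ℝ) (measurable_prodMk_left h₁),
          integral_indicator_const (1:ℝ) (measurable_prodMk_left h₂)]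
        simp [smul_eq_mul, Measure.real]

/-! ### PP-narrowness -/

theorem Tint_ppNarrow (hp : p ≠ ∞) : PPNarrow MM p (Tint hp) := by
  intro A hA _ ε hε
  obtain ⟨B₁, h₁, hsub, hsl⟩ := exists_halving A hA
  have h₂ : MeasurableSet (A \ B₁) := hA.diff h₁
  have hdisj : Disjoint B₁ (A \ B₁) := disjoint_sdiff_self_right
  have hunion : B₁ ∪ (A \ B₁) = A := union_diff_cancel hsub
  have hMeq : MM B₁ = MM (A \ B₁) := by
    rw [key, Measure.prod_apply h₁, Measure.prod_apply h₂]
    exact lintegral_congr fun s => by rw [(hsl s).1, (hsl s).2]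
  refine ⟨_, ⟨B₁, A \ B₁, h₁, h₂, hdisj, hunion, hMeq, rfl⟩, ?_⟩
  have hzero : Tint hp (indicatorConstLp p h₁ (measure_ne_top MM B₁) (1:ℝ) -
      indicatorConstLp p h₂ (measure_ne_top MM (A \ B₁)) (1:ℝ)) = 0 := by
    rw [Lp.eq_zero_iff_ae_eq_zero]
    filter_upwards [Tint_sign hp h₁ h₂] with s e
    rw [Pi.zero_apply, e, (hsl s).1, (hsl s).2, sub_self]
  rw [hzero, norm_zero]
  exact hε.le

/-! ### Failure of hereditary PP-narrowness -/

theorem nu_Icc_one : nu (Icc (0:ℝ) 1) = 1 := by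
  rw [Measure.restrict_apply' measurableSet_Icc, inter_self, Real.volume_Icc]
  norm_num

theorem MM_prod (E : Set ℝ) : MM (E ×ˢ Icc (0:ℝ) 1) = nu E := by
  rw [key, Measure.prod_prod, nu_Icc_one, mul_one]

theorem Tint_not_hpp (hp : p ≠ ∞) : ¬ HPPNarrow MM p (Tint hp) := by
  intro hH
  have hp1 : (1:ℝ≥0∞) ≤ p := Fact.out
  have h0 : p ≠ 0 := (lt_of_lt_of_le zero_lt_one hp1).ne'
  set S : Set (Set (ℝ × ℝ)) :=
    {B | ∃ E : Set ℝ, MeasurableSet E ∧ E ⊆ Icc (0:ℝ) 1 ∧ B = E ×ˢ Icc (0:ℝ) 1} with hS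
  have husq_mem : usq ∈ S := ⟨Icc 0 1, measurableSet_Icc, subset_rfl, rfl⟩
  have husq_meas : MeasurableSet usq := measurableSet_Icc.prod measurableSet_Icc
  have hMusq : MM usq = 1 := by rw [MM_prod, nu_Icc_one]
  have hpos : (0:ℝ≥0∞) < MM usq := by rw [hMusq]; exact zero_lt_one
  have hsub : IsSubSigmaAlgebraOn usq S := by
    constructor
    · rintro B ⟨E, hE, hEs, rfl⟩; exact hE.prod measurableSet_Icc
    · rintro B ⟨E, hE, hEs, rfl⟩; exact prod_mono hEs subset_rfl
    · exact husq_mem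
    · rintro B ⟨E, hE, hEs, rfl⟩
      refine ⟨Icc 0 1 \ E, measurableSet_Icc.diff hE, diff_subset, ?_⟩
      ext ⟨x, y⟩
      simp only [mem_diff, mem_prod]
      tauto
    · intro g hg
      choose Es hEs hEsub hEq using hg
      refine ⟨⋃ n, Es n, MeasurableSet.iUnion hEs, iUnion_subset hEsub, ?_⟩
      calc ⋃ n, g n = ⋃ n, Es n ×ˢ Icc (0:ℝ) 1 := iUnion_congr hEq
        _ = (⋃ n, Es n) ×ˢ Icc (0:ℝ) 1 := Set.iUnion_prod_const.symm
  have hna : NonatomicOn MM S := by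
    rintro B ⟨E, hE, hEs, rfl⟩ hBpos
    rw [MM_prod] at hBpos
    obtain ⟨τ, hτ, hcut⟩ := cut E
    refine ⟨(E ∩ Iic τ) ×ˢ Icc (0:ℝ) 1,
      ⟨E ∩ Iic τ, hE.inter measurableSet_Iic, inter_subset_left.trans hEs, rfl⟩,
      prod_mono inter_subset_left subset_rfl, ?_, ?_⟩
    · rw [MM_prod, hcut]
      exact ENNReal.half_pos hBpos.ne'
    · rw [MM_prod, MM_prod, hcut]
      exact ENNReal.half_lt_self hBpos.ne' (measure_ne_top _ _)
  obtain ⟨f, hsign, hnorm⟩ :=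
    hH usq husq_meas hpos S hsub hna usq husq_mem hpos (1/2) (by norm_num)
  obtain ⟨B₁, hB₁S, B₂, hB₂S, h₁, h₂, hdisj, hunion, hμeq, hf⟩ := hsign
  obtain ⟨E₁, hE₁, hE₁s, rfl⟩ := hB₁S
  obtain ⟨E₂, hE₂, hE₂s, rfl⟩ := hB₂S
  have h01 : (0:ℝ) ∈ Icc (0:ℝ) 1 := left_mem_Icc.2 zero_le_one
  have hcover : Icc (0:ℝ) 1 ⊆ E₁ ∪ E₂ := by
    intro s hs
    have hmem : (s, (0:ℝ)) ∈ E₁ ×ˢ Icc (0:ℝ) 1 ∪ E₂ ×ˢ Icc (0:ℝ) 1 := by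
      rw [hunion]
      exact mem_prod.2 ⟨hs, h01⟩
    rcases hmem with hm | hm
    · exact Or.inl hm.1
    · exact Or.inr hm.1
  have hEdisj : ∀ s, s ∈ E₁ → s ∉ E₂ := by
    intro s hs1 hs2
    exact Set.disjoint_left.1 hdisj (show (s, (0:ℝ)) ∈ E₁ ×ˢ Icc (0:ℝ) 1 from ⟨hs1, h01⟩)
      (show (s, (0:ℝ)) ∈ E₂ ×ˢ Icc (0:ℝ) 1 from ⟨hs2, h01⟩)
  have hT : ⇑(Tint hp f) =ᵐ[nu]
      fun s => E₁.indicator (fun _ => (1:ℝ)) s - E₂.indicator (fun _ => (1:ℝ)) s := by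
    rw [hf]
    filter_upwards [Tint_sign hp (hE₁.prod measurableSet_Icc) (hE₂.prod measurableSet_Icc)]
      with s e
    rw [e]
    congr 1
    · by_cases hs1 : s ∈ E₁
      · rw [mk_preimage_prod_right hs1, nu_Icc_one, indicator_of_mem hs1]
        norm_num
      · rw [mk_preimage_prod_right_eq_empty hs1, measure_empty, indicator_of_notMem hs1]
        norm_num
    · by_cases hs2 : s ∈ E₂
      · rw [mk_preimage_prod_right hs2, nu_Icc_one, indicator_of_mem hs2]
        norm_num
      · rw [mk_preimage_prod_right_eq_empty hs2, measure_empty, indicator_of_notMem hs2]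
        norm_num
  have hnuzero : (nu : Measure ℝ) ≠ 0 := IsProbabilityMeasure.ne_zero nu
  have hnorm1 : ‖Tint hp f‖ = 1 := by
    rw [Lp.norm_def, eLpNorm_congr_ae hT]
    have heq1 : eLpNorm (fun s => E₁.indicator (fun _ => (1:ℝ)) s -
        E₂.indicator (fun _ => (1:ℝ)) s) p nu = eLpNorm (fun _ : ℝ => (1:ℝ)) p nu := by
      apply eLpNorm_congr_norm_ae
      filter_upwards [ae_restrict_mem measurableSet_Icc] with s hs
      rcases hcover hs with hs1 | hs2
      · rw [indicator_of_mem hs1, indicator_of_notMem (hEdisj s hs1)]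
        norm_num
      · have hs1 : s ∉ E₁ := fun hmem => hEdisj s hmem hs2
        rw [indicator_of_notMem hs1, indicator_of_mem hs2]
        norm_num
    rw [heq1, eLpNorm_const (1:ℝ) h0 hnuzero]
    simp
  rw [hnorm1] at hnorm
  norm_num at hnorm

/-- example after Definition 2.5. There is a bounded linear operator
`T : L_p([0,1]²) → L_p[0,1]` with `(T f)(s) = ∫₀¹ f(s,t) dt` for a.e. `s`; it is
PP-narrow but not hereditarily PP-narrow. -/
theorem exists_ppNarrow_not_hppNarrow (p : ℝ≥0∞) [Fact (1 ≤ p)] (hp : p ≠ ∞) :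
    ∃ T : Lp ℝ p ((volume : Measure (ℝ × ℝ)).restrict
          (Set.Icc (0:ℝ) 1 ×ˢ Set.Icc (0:ℝ) 1)) →L[ℝ]
        Lp ℝ p ((volume : Measure ℝ).restrict (Set.Icc (0:ℝ) 1)),
      (∀ f, ∀ᵐ s ∂((volume : Measure ℝ).restrict (Set.Icc (0:ℝ) 1)),
        (T f : ℝ → ℝ) s = ∫ τ in Set.Icc (0:ℝ) 1, (f : ℝ × ℝ → ℝ) (s, τ)) ∧
      PPNarrow ((volume : Measure (ℝ × ℝ)).restrict
          (Set.Icc (0:ℝ) 1 ×ˢ Set.Icc (0:ℝ) 1)) p T ∧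
      ¬ HPPNarrow ((volume : Measure (ℝ × ℝ)).restrict
          (Set.Icc (0:ℝ) 1 ×ˢ Set.Icc (0:ℝ) 1)) p T := by
  refine ⟨Tint hp, fun f => ?_, Tint_ppNarrow hp, Tint_not_hpp hp⟩
  filter_upwards [Tint_spec hp f] with s hs using hs
end
end
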